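/- arXiv:1909.01587 — 7 statements merged into one kernel-verified Lean document; each statement's English description precedes it below -/
import Mathlib

section
/- (Erdős–Gallai, necessity) Let G be a finite simple graph on p vertices, and let v_1, v_2, …, v_p be an enumeration of its vertices with d_1 ≥ d_2 ≥ … ≥ d_p, where d_i = deg(v_i). Then for every k with 1 ≤ k ≤ p, \sum_{i=1}^{k} d_i ≤ k(k-1) + \sum_{i=k+1}^{p} \min(k, d_i). -/
/-- Erdős–Gallai (necessity): if the vertices of a finite simple graph on `p` vertices
are enumerated with nonincreasing degrees `d 1 ≥ d 2 ≥ … ≥ d p`, then for every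
`1 ≤ k ≤ p`, `∑_{i=1}^{k} d i ≤ k (k - 1) + ∑_{i=k+1}^{p} min k (d i)`. -/
theorem erdos_gallai_necessity {V : Type*} [Fintype V] [DecidableEq V]
    (G : SimpleGraph V) [DecidableRel G.Adj]
    (p : ℕ) (hp : Fintype.card V = p)
    (v : Fin p → V) (hv : Function.Bijective v)
    (hmono : ∀ i j : Fin p, i ≤ j → G.degree (v j) ≤ G.degree (v i)) :
    ∀ k : ℕ, 1 ≤ k → k ≤ p →
      ∑ i ∈ Finset.univ.filter (fun i : Fin p => (i : ℕ) < k), G.degree (v i)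
        ≤ k * (k - 1)
          + ∑ i ∈ Finset.univ.filter (fun i : Fin p => k ≤ (i : ℕ)), min k (G.degree (v i)) := by
  intro k hk1 hkp
  classical
  have hinj := hv.1
  set Ai := Finset.univ.filter (fun i : Fin p => (i : ℕ) < k) with hAi
  set Bi := Finset.univ.filter (fun i : Fin p => k ≤ (i : ℕ)) with hBi
  set A := Ai.image v with hA
  set B := Bi.image v with hB
  -- A and B partition univ
  have hdisj : Disjoint A B := by
    rw [hA, hB, Finset.disjoint_image hinj]
    simp only [hAi, hBi, Finset.disjoint_filter]
    intro i _ h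
    omega
  have hunion : A ∪ B = Finset.univ := by
    rw [hA, hB, ← Finset.image_union]
    have : Ai ∪ Bi = Finset.univ := by
      ext i; simp [hAi, hBi]; omega
    rw [this]
    apply Finset.eq_univ_of_forall
    intro x
    obtain ⟨i, rfl⟩ := hv.2 x
    exact Finset.mem_image_of_mem v (Finset.mem_univ i)
  have hAcard : A.card ≤ k := by
    rw [hA, Finset.card_image_of_injective _ hinj]
    calc Ai.card ≤ (Finset.range k).card :=
        Finset.card_le_card_of_injOn (fun i => (i : ℕ))
          (fun i hi => by
            simp only [hAi, Finset.mem_filter, Finset.mem_univ, true_and] at hi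
            simpa using hi)
          (fun a _ b _ h => Fin.ext h)
      _ = k := Finset.card_range k
  -- transfer the sums in the goal
  have hsumA : ∑ a ∈ A, G.degree a = ∑ i ∈ Ai, G.degree (v i) :=
    Finset.sum_image (fun x _ y _ h => hinj h)
  have hsumB : ∑ b ∈ B, min k (G.degree b) = ∑ i ∈ Bi, min k (G.degree (v i)) :=
    Finset.sum_image (fun x _ y _ h => hinj h)
  rw [← hsumA, ← hsumB]
  -- degree splits
  have hdeg : ∀ a : V, G.degree a =
      (A.filter (G.Adj a)).card + (B.filter (G.Adj a)).card := by
    intro a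
    rw [← Finset.card_union_of_disjoint (Finset.disjoint_filter_filter hdisj),
      ← Finset.filter_union, hunion]
    simp [SimpleGraph.degree, SimpleGraph.neighborFinset]
  have hsplit : ∑ a ∈ A, G.degree a
      = ∑ a ∈ A, (A.filter (G.Adj a)).card + ∑ a ∈ A, (B.filter (G.Adj a)).card := by
    rw [← Finset.sum_add_distrib]
    exact Finset.sum_congr rfl fun a _ => hdeg a
  rw [hsplit]
  have h1 : ∑ a ∈ A, (A.filter (G.Adj a)).card ≤ k * (k - 1) := by
    calc ∑ a ∈ A, (A.filter (G.Adj a)).card ≤ ∑ _a ∈ A, (k - 1) := by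
          apply Finset.sum_le_sum
          intro a ha
          have hsub : A.filter (G.Adj a) ⊆ A.erase a := by
            intro x hx
            simp only [Finset.mem_filter] at hx
            exact Finset.mem_erase.2 ⟨fun h => G.loopless.irrefl a (h ▸ hx.2), hx.1⟩
          calc (A.filter (G.Adj a)).card ≤ (A.erase a).card := Finset.card_le_card hsub
            _ = A.card - 1 := Finset.card_erase_of_mem ha
            _ ≤ k - 1 := Nat.sub_le_sub_right hAcard 1
      _ = A.card * (k - 1) := by rw [Finset.sum_const, smul_eq_mul]
      _ ≤ k * (k - 1) := Nat.mul_le_mul_right _ hAcard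
  have hswap : ∑ a ∈ A, (B.filter (G.Adj a)).card
      = ∑ b ∈ B, (A.filter (G.Adj b)).card := by
    simp_rw [Finset.card_filter]
    rw [Finset.sum_comm]
    refine Finset.sum_congr rfl fun b _ => Finset.sum_congr rfl fun a _ => ?_
    simp [G.adj_comm]
  have h2 : ∑ a ∈ A, (B.filter (G.Adj a)).card ≤ ∑ b ∈ B, min k (G.degree b) := by
    rw [hswap]
    apply Finset.sum_le_sum
    intro b _
    refine le_min ?_ ?_
    · exact le_trans (Finset.card_le_card (Finset.filter_subset _ _)) hAcard
    · rw [← SimpleGraph.card_neighborFinset_eq_degree]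
      apply Finset.card_le_card
      intro x hx
      simp only [Finset.mem_filter] at hx
      exact (SimpleGraph.mem_neighborFinset G b x).2 hx.2
  omega
end

section
/- (Erdős–Gallai, sufficiency) Let d_1 ≥ d_2 ≥ … ≥ d_p be a nonincreasing sequence of nonnegative integers such that \sum_{i=1}^{p} d_i is even and, for every k with 1 ≤ k ≤ p, \sum_{i=1}^{k} d_i ≤ k(k-1) + \sum_{i=k+1}^{p} \min(k, d_i). Then the sequence is graphic: there exists a finite simple graph on p vertices v_1, …, v_p with deg(v_i) = d_i for every i. -/
open Finset

section ErdosGallaiAux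

lemma eg_sum_fin_lt {M : Type*} [AddCommMonoid M] (p k : ℕ) (hk : k ≤ p) (f : ℕ → M) :
    ∑ i ∈ Finset.univ.filter (fun i : Fin p => (i : ℕ) < k), f (i : ℕ)
      = ∑ j ∈ range k, f j := by
  rw [Finset.sum_filter]
  rw [Fin.sum_univ_eq_sum_range (fun j => if j < k then f j else 0) p]
  rw [← Finset.sum_filter]
  congr 1
  ext j
  simp only [Finset.mem_filter, Finset.mem_range]
  omega

lemma eg_sum_fin_ge {M : Type*} [AddCommMonoid M] (p k : ℕ) (f : ℕ → M) :
    ∑ i ∈ Finset.univ.filter (fun i : Fin p => k ≤ (i : ℕ)), f (i : ℕ)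
      = ∑ j ∈ Ico k p, f j := by
  rw [Finset.sum_filter]
  rw [Fin.sum_univ_eq_sum_range (fun j => if k ≤ j then f j else 0) p]
  rw [← Finset.sum_filter]
  congr 1
  ext j
  simp only [Finset.mem_filter, Finset.mem_range, Finset.mem_Ico]
  omega

lemma eg_graph_step {V : Type*} [Fintype V] [DecidableEq V] (G : SimpleGraph V) (i0 : V)
    (S : Finset V) (hi0 : i0 ∉ S) (hiso : G.neighborSet i0 = ∅) :
    ∃ H : SimpleGraph V, ∀ x, (H.neighborSet x).ncard =
      (G.neighborSet x).ncard + (if x = i0 then S.card else if x ∈ S then 1 else 0) := by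
  classical
  have hGadj : ∀ y, ¬ G.Adj i0 y := by
    intro y hy
    have : y ∈ G.neighborSet i0 := hy
    simp [hiso] at this
  have hsymm : ∀ u v : V, (G.Adj u v ∨ (u = i0 ∧ v ∈ S) ∨ (v = i0 ∧ u ∈ S)) →
      (G.Adj v u ∨ (v = i0 ∧ u ∈ S) ∨ (u = i0 ∧ v ∈ S)) := by
    intro u v h
    rcases h with h | ⟨h1, h2⟩ | ⟨h1, h2⟩
    · exact Or.inl h.symm
    · exact Or.inr (Or.inr ⟨h1, h2⟩)
    · exact Or.inr (Or.inl ⟨h1, h2⟩)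
  have hirr : ∀ u : V, ¬ (G.Adj u u ∨ (u = i0 ∧ u ∈ S) ∨ (u = i0 ∧ u ∈ S)) := by
    intro u h
    rcases h with h | ⟨h1, h2⟩ | ⟨h1, h2⟩
    · exact G.irrefl h
    · exact hi0 (h1 ▸ h2)
    · exact hi0 (h1 ▸ h2)
  refine ⟨⟨fun u v => G.Adj u v ∨ (u = i0 ∧ v ∈ S) ∨ (v = i0 ∧ u ∈ S),
      ⟨fun u v h => hsymm u v h⟩, ⟨fun u h => hirr u h⟩⟩, ?_⟩
  set H : SimpleGraph V := ⟨fun u v => G.Adj u v ∨ (u = i0 ∧ v ∈ S) ∨ (v = i0 ∧ u ∈ S),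
      ⟨fun u v h => hsymm u v h⟩, ⟨fun u h => hirr u h⟩⟩ with hH
  have hHadj : ∀ u v, H.Adj u v ↔ (G.Adj u v ∨ (u = i0 ∧ v ∈ S) ∨ (v = i0 ∧ u ∈ S)) :=
    fun u v => Iff.rfl
  intro x
  by_cases hx : x = i0
  · subst hx
    have hns : H.neighborSet x = ↑S := by
      ext y
      constructor
      · intro hy
        rcases (hHadj _ _).1 hy with h | ⟨h1, h2⟩ | ⟨h1, h2⟩
        · exact absurd h (hGadj y)
        · exact h2
        · exact absurd (h1 ▸ h2) hi0
      · intro hy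
        exact (hHadj _ _).2 (Or.inr (Or.inl ⟨rfl, hy⟩))
    rw [hns]
    simp [hiso, Set.ncard_coe_finset]
  · by_cases hxS : x ∈ S
    · have hns : H.neighborSet x = insert i0 (G.neighborSet x) := by
        ext y
        constructor
        · intro hy
          rcases (hHadj _ _).1 hy with h | ⟨h1, h2⟩ | ⟨h1, h2⟩
          · exact Set.mem_insert_iff.2 (Or.inr h)
          · exact absurd h1 hx
          · exact Set.mem_insert_iff.2 (Or.inl h1)
        · intro hy
          rcases Set.mem_insert_iff.1 hy with h | h
          · exact (hHadj _ _).2 (Or.inr (Or.inr ⟨h, hxS⟩))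
          · exact (hHadj _ _).2 (Or.inl h)
      rw [hns, Set.ncard_insert_of_notMem _ (Set.toFinite _)]
      · simp [hx, hxS, Nat.add_comm]
      · intro hmem
        have : G.Adj x i0 := hmem
        exact hGadj x this.symm
    · have hns : H.neighborSet x = G.neighborSet x := by
        ext y
        constructor
        · intro hy
          rcases (hHadj _ _).1 hy with h | ⟨h1, h2⟩ | ⟨h1, h2⟩
          · exact h
          · exact absurd h1 hx
          · exact absurd h2 hxS
        · exact fun h => (hHadj _ _).2 (Or.inl h)
      rw [hns]
      simp [hx, hxS]

private lemma eg_core_2bi (A θ m k B n : ℕ) (hAm : A < m) (hmk : m ≤ k) (hkB : k < B)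
    (hθB : θ < B) (hBn : B + 1 ≤ n) :
    A*(n-1) + (k-A)*θ + m ≤ k*(k-1) + (B-k)*k + (n-B)*m + A := by
  have e1 : (1:ℕ) ≤ n := by omega
  have e2 : A ≤ k := by omega
  have e3 : k ≤ B := by omega
  have e4 : B ≤ n := by omega
  have hk1 : (1:ℕ) ≤ k := by omega
  zify [e1, e2, e3, e4, hk1]
  have c1 : (θ:ℤ) + 1 ≤ (B:ℤ) := by exact_mod_cast hθB
  have c2 : (B:ℤ) + 1 ≤ (n:ℤ) := by exact_mod_cast hBn
  have c3 : (A:ℤ) + 1 ≤ (m:ℤ) := by exact_mod_cast hAm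
  have c4 : (m:ℤ) ≤ (k:ℤ) := by exact_mod_cast hmk
  have c5 : (k:ℤ) + 1 ≤ (B:ℤ) := by exact_mod_cast hkB
  have hint1 : (0:ℤ) ≤ ((n:ℤ) - B - 1) * ((m:ℤ) - A) :=
    mul_nonneg (by linarith) (by linarith)
  have hint2 : (0:ℤ) ≤ ((k:ℤ) - A) * ((B:ℤ) - 1 - θ) :=
    mul_nonneg (by linarith) (by linarith)
  nlinarith [hint1, hint2]

private lemma eg_comb_2bi (L SA Y T A θ m k B n sk : ℕ)
    (hL : L = SA + (k-A)*θ) (hLA : SA ≤ A*(n-1)) (hT : T = (B-k)*k + Y)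
    (hTail : (n-B)*m ≤ Y) (hskA : A ≤ sk)
    (hAm : A < m) (hmk : m ≤ k) (hkB : k < B) (hθB : θ < B) (hBn : B + 1 ≤ n) :
    L + m ≤ k*(k-1) + T + sk := by
  have := eg_core_2bi A θ m k B n hAm hmk hkB hθB hBn
  omega

private lemma eg_core_2bii (X Y bp θ m k B qn sk : ℕ)
    (hegb2 : X + (bp+1-k)*θ ≤ (bp+1)*((bp+1)-1) + ((B-(bp+1))*(bp+1) + Y))
    (hqnb : qn + k ≤ bp + 1)
    (hsk : sk + qn = m)
    (hBθ : B ≤ θ) (hkB : k < B) (hk1 : 1 ≤ k) (hbpB : bp < B) :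
    X + m ≤ k*(k-1) + ((B-k)*k + Y) + sk := by
  have e1 : (1:ℕ) ≤ bp+1 := by omega
  have e2 : k ≤ bp+1 := by omega
  have e3 : bp+1 ≤ B := by omega
  have e4 : k ≤ B := by omega
  zify [e1, e2, e3, e4, hk1] at hegb2 ⊢
  have hskz : (sk:ℤ) = (m:ℤ) - qn := by
    have h := hsk
    omega
  have t2 : (B:ℤ) ≤ (θ:ℤ) := by exact_mod_cast hBθ
  have t3 : (0:ℤ) ≤ (qn:ℤ) := Int.natCast_nonneg qn
  have t1 : (qn:ℤ) + k ≤ (bp:ℤ) + 1 := by exact_mod_cast hqnb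
  have m1 : (0:ℤ) ≤ (bp:ℤ)+1-k := by linarith
  have m2 : (0:ℤ) ≤ (θ:ℤ) - B := by linarith
  have hint3 : (qn:ℤ) ≤ ((bp:ℤ)+1-(k:ℤ)) * ((θ:ℤ)-(B:ℤ)+1) := by
    nlinarith [mul_nonneg m1 m2]
  nlinarith [hegb2, hint3, hskz]


private lemma eg_core_B (Rk Tk RA A θ m k n bp qn : ℕ)
    (hRk : Rk = RA + (k-A)*θ)
    (hRA : RA ≤ A*(n-1))
    (hT : (bp+1-k)*θ + (n-(bp+1))*m ≤ Tk)
    (heven : Even (Rk + Tk))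
    (hq1 : qn + A ≤ m) (hq2 : qn + θ ≤ bp + 1)
    (hAm : A < m) (hmθ : m ≤ θ) (hθk : θ ≤ k) (hkbp : k ≤ bp) (hbpn : bp + 2 ≤ n)
    (hk1 : 1 ≤ k) :
    Rk + 2*qn ≤ k*(k-1) + Tk := by
  have e1 : A ≤ k := by omega
  have e2 : k ≤ bp+1 := by omega
  have e3 : bp+1 ≤ n := by omega
  have e4 : (1:ℕ) ≤ n := by omega
  obtain ⟨t, ht⟩ := heven
  have hKeven : Even ((k:ℤ) * ((k:ℤ)-1)) := by
    have h := Int.even_mul_succ_self ((k:ℤ)-1)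
    have he : ((k:ℤ)-1) * (((k:ℤ)-1)+1) = (k:ℤ) * ((k:ℤ)-1) := by ring
    rwa [he] at h
  obtain ⟨u, hu⟩ := hKeven
  zify [e1, e2, e3, e4, hk1] at hRk hRA hT ⊢
  have c0 : (0:ℤ) ≤ (qn:ℤ) := Int.natCast_nonneg qn
  have c1 : (qn:ℤ) + A ≤ m := by exact_mod_cast hq1
  have c2 : (qn:ℤ) + θ ≤ (bp:ℤ) + 1 := by exact_mod_cast hq2
  have cA : (A:ℤ) + 1 ≤ m := by exact_mod_cast hAm
  have cmθ : (m:ℤ) ≤ θ := by exact_mod_cast hmθ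
  have cθk : (θ:ℤ) ≤ k := by exact_mod_cast hθk
  have ckbp : (k:ℤ) ≤ bp := by exact_mod_cast hkbp
  have cbpn : (bp:ℤ) + 2 ≤ n := by exact_mod_cast hbpn
  have hint1 : (qn:ℤ)*(qn:ℤ) ≤ ((n:ℤ)-1-θ)*((m:ℤ)-A) := by
    apply mul_le_mul (by linarith) (by linarith) c0 (by linarith)
  have hint2 : (0:ℤ) ≤ ((bp:ℤ)-θ)*((θ:ℤ)-m) := mul_nonneg (by linarith) (by linarith)
  have hint3 : (0:ℤ) ≤ ((k:ℤ)-θ)*((k:ℤ)-θ-1) := by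
    rcases le_or_gt ((θ:ℤ)+1) (k:ℤ) with h | h
    · exact mul_nonneg (by linarith) (by linarith)
    · have hk : (k:ℤ) = (θ:ℤ) := by linarith
      rw [hk]
      simp
  have hbound : (Rk:ℤ) + 2*qn ≤ (k:ℤ)*((k:ℤ)-1) + Tk + 1 := by
    nlinarith [hint1, hint2, hint3, sq_nonneg ((qn:ℤ)-1)]
  have htz : (Rk:ℤ) + Tk = t + t := by exact_mod_cast ht
  rw [hu] at hbound ⊢
  omega

lemma eg_reduce (p n m : ℕ) (D : ℕ → ℕ)
    (hanti : ∀ i j, i ≤ j → D j ≤ D i)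
    (hn2 : 2 ≤ n) (hnp : n ≤ p)
    (hzero : ∀ i, n ≤ i → D i = 0)
    (hpos : ∀ i, i < n → 1 ≤ D i)
    (hDn : D (n-1) = m) (hm1 : 1 ≤ m)
    (heven : Even (∑ i ∈ range p, D i))
    (hEG : ∀ k, 1 ≤ k → k ≤ p →
      ∑ i ∈ range k, D i ≤ k * (k - 1) + ∑ i ∈ Ico k p, min k (D i)) :
    ∃ (S : Finset ℕ) (D' : ℕ → ℕ),
      S.card = m ∧ (∀ i ∈ S, i < n - 1) ∧ (∀ i ∈ S, 1 ≤ D i) ∧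
      (∀ i, D' i = if i ∈ S then D i - 1 else if i = n - 1 then 0 else D i) ∧
      (∀ i j, i ≤ j → D' j ≤ D' i) ∧ (∀ i, p ≤ i → D' i = 0) ∧
      ((∑ i ∈ range p, D' i) + 2 * m = ∑ i ∈ range p, D i) ∧
      (∀ k, 1 ≤ k → k ≤ p →
        ∑ i ∈ range k, D' i ≤ k * (k - 1) + ∑ i ∈ Ico k p, min k (D' i)) := by
  classical
  -- d₁ ≤ n - 1
  have hd1 : ∀ i, D i ≤ n - 1 := by
    have h0 : D 0 ≤ n - 1 := by
      have h1 := hEG 1 le_rfl (by omega)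
      have hsplit : ∑ i ∈ Ico 1 p, min 1 (D i)
          = (∑ i ∈ Ico 1 n, min 1 (D i)) + ∑ i ∈ Ico n p, min 1 (D i) :=
        (Finset.sum_Ico_consecutive _ (by omega) hnp).symm
      have hIco1n : ∑ i ∈ Ico 1 n, min 1 (D i) = n - 1 := by
        rw [Finset.sum_congr rfl (fun i hi => ?_), Finset.sum_const, Nat.card_Ico, smul_eq_mul,
          mul_one]
        have := hpos i (Finset.mem_Ico.1 hi).2
        omega
      have hIconp : ∑ i ∈ Ico n p, min 1 (D i) = 0 := by
        apply Finset.sum_eq_zero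
        intro i hi
        rw [hzero i (Finset.mem_Ico.1 hi).1]
        simp
      simp only [Finset.sum_range_one] at h1
      omega
    intro i
    exact le_trans (hanti 0 i (Nat.zero_le i)) h0
  have hmn1 : m ≤ n - 1 := hDn ▸ hd1 (n-1)
  set θ := D (m-1) with hθdef
  have hmθ : m ≤ θ := by
    have := hanti (m-1) (n-1) (by omega)
    omega
  have hθn : θ ≤ n - 1 := hd1 _
  have hθ1 : 1 ≤ θ := le_trans hm1 hmθ
  -- A : start of the class of θ
  have hAex : ∃ i, D i ≤ θ := ⟨m-1, le_rfl⟩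
  set A := Nat.find hAex with hAdef
  have hDA' : D A ≤ θ := Nat.find_spec hAex
  have hAmin : ∀ i, i < A → θ < D i := by
    intro i hi
    have := Nat.find_min hAex hi
    omega
  have hAm : A ≤ m - 1 := Nat.find_min' hAex le_rfl
  have hDA : D A = θ := le_antisymm hDA' (hθdef ▸ hanti A (m-1) hAm)
  -- bp : end of the class of θ, capped at n-2
  set bp := Nat.findGreatest (fun i => θ ≤ D i) (n-2) with hbpdef
  have hm1bp : m - 1 ≤ bp := Nat.le_findGreatest (by omega) (show θ ≤ D (m-1) from le_rfl)
  have hbpn2 : bp ≤ n - 2 := Nat.findGreatest_le _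
  have hDbp : D bp = θ := by
    have h1 := hanti (m-1) bp hm1bp
    have h2 : θ ≤ D bp := Nat.findGreatest_spec (P := fun i => θ ≤ D i) (m := m-1)
      (by omega) le_rfl
    omega
  have hbpmax : ∀ i, bp < i → i ≤ n-2 → D i < θ := by
    intro i h1 h2
    have := Nat.findGreatest_is_greatest (P := fun i => θ ≤ D i) h1 h2
    omega
  have hclass : ∀ i, A ≤ i → i ≤ bp → D i = θ := by
    intro i h1 h2
    have := hanti A i h1
    have := hanti i bp h2
    omega
  have hmbp : m ≤ bp + 1 := by omega
  set lo := bp + 1 - (m - A) with hlodef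
  have hAm' : A ≤ m - 1 := hAm
  have hAmlt : A < m := by omega
  have hlo : lo + (m - A) = bp + 1 := by omega
  have hAlo : A ≤ lo := by omega
  have hlobp : lo ≤ bp := by omega
  set S : Finset ℕ := range A ∪ Icc lo bp with hSdef
  have hSmem : ∀ i, i ∈ S ↔ (i < A ∨ (lo ≤ i ∧ i ≤ bp)) := by
    intro i
    simp [hSdef, Finset.mem_union, Finset.mem_range, Finset.mem_Icc]
  have hSbp : ∀ i ∈ S, i ≤ bp := by
    intro i hi
    rcases (hSmem i).1 hi with h | h
    · omega
    · exact h.2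
  have hSn1 : ∀ i ∈ S, i < n - 1 := fun i hi => by have := hSbp i hi; omega
  have hSθ : ∀ i ∈ S, θ ≤ D i := by
    intro i hi
    rcases (hSmem i).1 hi with h | h
    · exact le_of_lt (hAmin i h)
    · rw [hclass i (le_trans hAlo h.1) h.2]
  have hSpos : ∀ i ∈ S, 1 ≤ D i := fun i hi => le_trans hθ1 (hSθ i hi)
  have hScard : S.card = m := by
    rw [hSdef, Finset.card_union_of_disjoint, Finset.card_range, Nat.card_Icc]
    · omega
    · rw [Finset.disjoint_left]
      intro x hx hx2
      rw [Finset.mem_range] at hx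
      rw [Finset.mem_Icc] at hx2
      omega
  have hn1S : (n-1) ∉ S := by
    intro h
    have := hSn1 _ h
    omega
  set D' : ℕ → ℕ := fun i => if i ∈ S then D i - 1 else if i = n - 1 then 0 else D i
    with hD'def
  have hD'S : ∀ i ∈ S, D' i = D i - 1 := by
    intro i hi
    simp only [hD'def, if_pos hi]
  have hD'n1 : D' (n-1) = 0 := by
    simp only [hD'def]
    rw [if_neg hn1S]
    simp
  have hD'other : ∀ i, i ∉ S → i ≠ n-1 → D' i = D i := by
    intro i h1 h2
    simp only [hD'def, if_neg h1, if_neg h2]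
  have hD'le : ∀ i, D' i ≤ D i := by
    intro i
    by_cases h1 : i ∈ S
    · rw [hD'S i h1]; omega
    · by_cases h2 : i = n-1
      · rw [h2, hD'n1]; exact Nat.zero_le _
      · rw [hD'other i h1 h2]
  -- antitone
  have hD'anti : ∀ i j, i ≤ j → D' j ≤ D' i := by
    intro i j hij
    by_cases hjS : j ∈ S
    · rw [hD'S j hjS]
      by_cases hiS : i ∈ S
      · rw [hD'S i hiS]
        have := hanti i j hij
        omega
      · have hin1 : i ≠ n - 1 := by
          have := hSn1 j hjS
          omega
        rw [hD'other i hiS hin1]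
        have := hanti i j hij
        omega
    · by_cases hjn1 : j = n-1
      · rw [hjn1, hD'n1]; exact Nat.zero_le _
      · rw [hD'other j hjS hjn1]
        by_cases hiS : i ∈ S
        · rw [hD'S i hiS]
          -- need D j < D i
          have hDiθ : θ ≤ D i := hSθ i hiS
          by_cases hjbp : j ≤ bp
          · -- then A ≤ j < lo, D j = θ, and i < A so D i > θ
            have hjA : A ≤ j := by
              by_contra hc
              exact hjS ((hSmem j).2 (Or.inl (by omega)))
            have hjlo : j < lo := by
              by_contra hc
              exact hjS ((hSmem j).2 (Or.inr ⟨by omega, hjbp⟩))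
            have hDj : D j = θ := hclass j hjA hjbp
            have hiA : i < A := by
              rcases (hSmem i).1 hiS with h | h
              · exact h
              · omega
            have := hAmin i hiA
            omega
          · by_cases hjn : j ≤ n - 2
            · have := hbpmax j (by omega) hjn
              omega
            · have hjge : n ≤ j := by omega
              rw [hzero j hjge]
              have := hSpos i hiS
              omega
        · by_cases hin1 : i = n-1
          · -- i = n-1 ≤ j, j ≠ n-1 so j ≥ n, D j = 0
            have : n ≤ j := by omega
            rw [hzero j this]
            exact Nat.zero_le _
          · rw [hD'other i hiS hin1]
            exact hanti i j hij
  have hD'zero : ∀ i, p ≤ i → D' i = 0 := by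
    intro i hi
    have h1 : i ∉ S := fun h => by have := hSn1 i h; omega
    have h2 : i ≠ n - 1 := by omega
    rw [hD'other i h1 h2]
    exact hzero i (by omega)
  -- sum identity
  have hDD' : ∀ i, D i = D' i + ((if i ∈ S then 1 else 0) + (if i = n-1 then m else 0)) := by
    intro i
    by_cases h1 : i ∈ S
    · have := hSpos i h1
      have h2 : i ≠ n-1 := fun h => hn1S (h ▸ h1)
      rw [hD'S i h1, if_pos h1, if_neg h2]
      omega
    · by_cases h2 : i = n-1
      · rw [h2, hD'n1, if_neg hn1S, if_pos rfl, ← hDn]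
        omega
      · rw [hD'other i h1 h2, if_neg h1, if_neg h2]
        omega
  have hsum : (∑ i ∈ range p, D' i) + 2 * m = ∑ i ∈ range p, D i := by
    have h1 : ∑ i ∈ range p, D i
        = (∑ i ∈ range p, D' i) + ((∑ i ∈ range p, if i ∈ S then 1 else 0)
          + ∑ i ∈ range p, if i = n-1 then m else 0) := by
      rw [← Finset.sum_add_distrib, ← Finset.sum_add_distrib]
      exact Finset.sum_congr rfl (fun i _ => hDD' i)
    have h2 : (∑ i ∈ range p, if i ∈ S then 1 else 0) = m := by
      rw [Finset.sum_ite_mem]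
      have : range p ∩ S = S := by
        apply Finset.inter_eq_right.2
        intro i hi
        rw [Finset.mem_range]
        have := hSn1 i hi
        omega
      rw [this, Finset.sum_const, smul_eq_mul, mul_one, hScard]
    have h3 : (∑ i ∈ range p, if i = n-1 then m else 0) = m := by
      rw [Finset.sum_ite_eq' (range p) (n-1) (fun _ => m)]
      rw [if_pos (Finset.mem_range.2 (by omega))]
    omega
  refine ⟨S, D', hScard, hSn1, hSpos, fun i => rfl, hD'anti, hD'zero, hsum, ?_⟩
  -- tail cutoff conversion
  have hD'zn : ∀ i, n ≤ i → D' i = 0 := by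
    intro i hi
    have h1 : i ∉ S := fun h => by have := hSn1 i h; omega
    have h2 : i ≠ n - 1 := by omega
    rw [hD'other i h1 h2]
    exact hzero i hi
  have hcut : ∀ (E : ℕ → ℕ), (∀ i, n ≤ i → E i = 0) → ∀ k', k' ≤ n →
      ∑ i ∈ Ico k' p, min k' (E i) = ∑ i ∈ Ico k' n, min k' (E i) := by
    intro E hE k' hk'
    symm
    apply Finset.sum_subset (Finset.Ico_subset_Ico le_rfl hnp)
    intro x hx hnx
    rw [Finset.mem_Ico] at hx hnx
    rw [hE x (by omega)]
    simp
  have hEGn : ∀ k', 1 ≤ k' → k' ≤ n →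
      ∑ i ∈ range k', D i ≤ k' * (k' - 1) + ∑ i ∈ Ico k' n, min k' (D i) := by
    intro k' h1 h2
    have := hEG k' h1 (le_trans h2 hnp)
    rwa [hcut D hzero k' h2] at this
  intro k hk1 hkp
  rcases le_or_gt n k with hnk | hkn
  · -- trivial case k ≥ n
    have hT0 : ∑ i ∈ Ico k p, min k (D i) = 0 := by
      apply Finset.sum_eq_zero
      intro i hi
      rw [hzero i (le_trans hnk (Finset.mem_Ico.1 hi).1)]
      simp
    have h := hEG k hk1 hkp
    rw [hT0] at h
    calc ∑ i ∈ range k, D' i ≤ ∑ i ∈ range k, D i := Finset.sum_le_sum (fun i _ => hD'le i)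
      _ ≤ k * (k-1) := by omega
      _ ≤ k * (k-1) + ∑ i ∈ Ico k p, min k (D' i) := Nat.le_add_right _ _
  · -- main case k < n
    set sk := (S ∩ range k).card with hskdef
    set qn := (S \ range k).card with hqndef
    have hskqn : sk + qn = m := by
      rw [hskdef, hqndef, Finset.card_inter_add_card_sdiff, hScard]
    have hL'k : ∑ i ∈ range k, D i = (∑ i ∈ range k, D' i) + sk := by
      have h1 : ∀ i ∈ range k, D i = D' i + (if i ∈ S then 1 else 0) := by
        intro i hi
        rw [Finset.mem_range] at hi
        have h2 : i ≠ n - 1 := by omega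
        have := hDD' i
        rw [if_neg h2] at this
        omega
      rw [Finset.sum_congr rfl h1, Finset.sum_add_distrib]
      congr 1
      rw [Finset.sum_ite_mem, Finset.sum_const, smul_eq_mul, mul_one, Finset.inter_comm]
    rw [hcut D' hD'zn k (le_of_lt hkn)]
    rcases lt_or_ge k θ with hkθ | hθk
    · -- BRANCH A : k < θ
      have hE2 : ∑ i ∈ Ico k n, min k (D i) = (∑ i ∈ Ico k n, min k (D' i)) + min k m := by
        have hn1 : n - 1 + 1 = n := by omega
        have hkn1 : k ≤ n - 1 := by omega
        rw [← hn1, Finset.sum_Ico_succ_top hkn1, Finset.sum_Ico_succ_top hkn1]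
        have hterm : ∀ i ∈ Ico k (n-1), min k (D i) = min k (D' i) := by
          intro i hi
          rw [Finset.mem_Ico] at hi
          by_cases hiS : i ∈ S
          · have hDi : θ ≤ D i := hSθ i hiS
            rw [hD'S i hiS]
            have h3 : k ≤ D i - 1 := by omega
            have h4 : k ≤ D i := by omega
            rw [min_eq_left h3, min_eq_left h4]
          · rw [hD'other i hiS (by omega)]
        rw [Finset.sum_congr rfl hterm, hD'n1, hDn]
        simp only [Nat.min_zero]
        omega
      -- suffices : the main estimate
      suffices hGA : ∑ i ∈ range k, D i + min k m ≤ k * (k-1) + (∑ i ∈ Ico k n, min k (D i)) + sk by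
        omega
      clear hE2 hL'k
      rcases le_or_gt k A with hkA | hAk
      · -- k ≤ A : range k ⊆ S
        have hsub : range k ⊆ S := by
          intro i hi
          rw [Finset.mem_range] at hi
          exact (hSmem i).2 (Or.inl (by omega))
        have hsk : sk = k := by
          rw [hskdef, Finset.inter_eq_right.2 hsub, Finset.card_range]
        have h := hEGn k hk1 (by omega)
        have hmin : min k m ≤ k := min_le_left _ _
        omega
      rcases lt_or_ge bp k with hbpk | hkbp
      · -- bp < k : S ⊆ range k
        have hsub : S ⊆ range k := fun i hi => Finset.mem_range.2 (by have := hSbp i hi; omega)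
        have hsk : sk = m := by rw [hskdef, Finset.inter_eq_left.2 hsub, hScard]
        have h := hEGn k hk1 (by omega)
        have hmin : min k m ≤ m := min_le_right _ _
        omega
      -- now A < k ≤ bp
      by_cases hθn1 : θ = n - 1
      · -- top value is n-1 : then m = bp+1, lo = 0 and range k ⊆ S
        have hA0 : A = 0 := by
          have h0 : D 0 ≤ θ := by rw [hθn1]; exact hd1 0
          have := Nat.find_min' hAex h0
          omega
        obtain ⟨c, hc⟩ : ∃ c, n - 2 = bp + c := ⟨n - 2 - bp, by omega⟩
        have hegb := hEGn (bp+1) (by omega) (by omega)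
        have hLb : ∑ i ∈ range (bp+1), D i = (bp+1) * (n-1) := by
          rw [Finset.sum_congr rfl (fun i hi => ?_), Finset.sum_const, Finset.card_range,
            smul_eq_mul]
          rw [hclass i (by omega) (by rw [Finset.mem_range] at hi; omega), hθn1]
        have hTb : ∑ i ∈ Ico (bp+1) n, min (bp+1) (D i) ≤ (n-2-bp) * (bp+1) + min (bp+1) m := by
          rw [← Finset.sum_Ico_consecutive (fun i => min (bp+1) (D i)) (show bp+1 ≤ n-1 by omega)
            (show n-1 ≤ n by omega)]
          have hsingle : ∑ i ∈ Ico (n-1) n, min (bp+1) (D i) = min (bp+1) m := by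
            have : Ico (n-1) n = {n-1} := by
              ext x
              simp only [Finset.mem_Ico, Finset.mem_singleton]
              omega
            rw [this, Finset.sum_singleton, hDn]
          have h2 : ∑ i ∈ Ico (bp+1) (n-1), min (bp+1) (D i) ≤ (n-2-bp) * (bp+1) := by
            calc ∑ i ∈ Ico (bp+1) (n-1), min (bp+1) (D i)
                ≤ ∑ _i ∈ Ico (bp+1) (n-1), (bp+1) :=
                  Finset.sum_le_sum (fun i _ => min_le_left _ _)
              _ = (n-2-bp) * (bp+1) := by
                  rw [Finset.sum_const, Nat.card_Ico, smul_eq_mul]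
                  congr 1
                  omega
          rw [hsingle]
          exact Nat.add_le_add_right h2 _
        have hkey : (bp+1) * (n-1) = (bp+1) * ((bp+1)-1) + ((n-2-bp) * (bp+1)) + (bp+1) := by
          have h1 : n - 1 = bp + c + 1 := by omega
          have h2 : n - 2 - bp = c := by omega
          have h3 : (bp+1) - 1 = bp := by omega
          rw [h1, h2, h3]
          ring
        have hmeq : m = bp + 1 := by
          have hminm : min (bp+1) m ≤ m := min_le_right _ _
          have hminm2 : min (bp+1) m ≤ bp+1 := min_le_left _ _
          rw [hLb] at hegb
          linarith
        have hsub : range k ⊆ S := by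
          intro i hi
          rw [Finset.mem_range] at hi
          exact (hSmem i).2 (Or.inr ⟨by omega, by omega⟩)
        have hsk : sk = k := by
          rw [hskdef, Finset.inter_eq_right.2 hsub, Finset.card_range]
        have h := hEGn k hk1 (by omega)
        have hmin : min k m ≤ k := min_le_left _ _
        omega
      · -- θ ≤ n-2
        have hθn2 : θ ≤ n - 2 := by omega
        rcases lt_or_ge k m with hkm | hmk
        · -- 2a : k < m
          have hTk : ∑ i ∈ Ico k n, min k (D i) = (n - k) * k := by
            rw [Finset.sum_congr rfl (fun i hi => ?_), Finset.sum_const, Nat.card_Ico,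
              smul_eq_mul]
            rw [Finset.mem_Ico] at hi
            have hm : m ≤ D i := by
              have := hanti i (n-1) (by omega)
              omega
            exact min_eq_left (by omega)
          have hkey : ∑ i ∈ range k, (D i + (if i ∈ S then 0 else 1)) ≤ k * (n-1) := by
            calc ∑ i ∈ range k, (D i + (if i ∈ S then 0 else 1))
                ≤ ∑ _i ∈ range k, (n-1) := by
                  apply Finset.sum_le_sum
                  intro i hi
                  rw [Finset.mem_range] at hi
                  by_cases hiS : i ∈ S
                  · rw [if_pos hiS]
                    have := hd1 i
                    omega
                  · rw [if_neg hiS]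
                    have hiA : A ≤ i := by
                      by_contra hcon
                      exact hiS ((hSmem i).2 (Or.inl (by omega)))
                    have hilo : i < lo := by
                      by_contra hcon
                      exact hiS ((hSmem i).2 (Or.inr ⟨by omega, by omega⟩))
                    have hDi : D i = θ := hclass i hiA (by omega)
                    omega
              _ = k * (n-1) := by rw [Finset.sum_const, Finset.card_range, smul_eq_mul]
          have hsplit2 : ∑ i ∈ range k, (D i + (if i ∈ S then 0 else 1))
              = (∑ i ∈ range k, D i) + (k - sk) := by
            rw [Finset.sum_add_distrib]
            congr 1
            have h1 : (∑ i ∈ range k, (if i ∈ S then (0:ℕ) else 1))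
                + (∑ i ∈ range k, (if i ∈ S then (1:ℕ) else 0)) = k := by
              rw [← Finset.sum_add_distrib]
              have : ∀ i ∈ range k, ((if i ∈ S then (0:ℕ) else 1) + (if i ∈ S then (1:ℕ) else 0)) = 1 := by
                intro i _
                split_ifs <;> rfl
              rw [Finset.sum_congr rfl this, Finset.sum_const, Finset.card_range, smul_eq_mul,
                mul_one]
            have h2 : ∑ i ∈ range k, (if i ∈ S then (1:ℕ) else 0) = sk := by
              rw [Finset.sum_ite_mem, Finset.sum_const, smul_eq_mul, mul_one, Finset.inter_comm]
            omega
          have hmulid : k * (k-1) + (n-k) * k = k * (n-1) := by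
            have e1 : n - 1 = (k-1) + (n-k) := by omega
            rw [e1, Nat.mul_add]
            congr 1
            exact Nat.mul_comm _ _
          have hminkm : min k m = k := min_eq_left (by omega)
          have hsklek : sk ≤ k := by
            calc sk ≤ (range k).card := Finset.card_le_card (Finset.inter_subset_right)
              _ = k := Finset.card_range k
          have hsub : (k - sk) + sk = k := by omega
          linarith
        · -- 2b : m ≤ k
          have hBex : ∃ i, D i ≤ k := ⟨n-1, by omega⟩
          set B := Nat.find hBex with hBdef
          have hDB : D B ≤ k := Nat.find_spec hBex
          have hBmin : ∀ i, i < B → k < D i := by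
            intro i hi
            have := Nat.find_min hBex hi
            omega
          have hBn1 : B ≤ n - 1 := Nat.find_min' hBex (by omega)
          have hbpB : bp < B := by
            by_contra hcon
            push_neg at hcon
            have := hanti B bp hcon
            omega
          have hkB : k < B := by omega
          have hTsplit : ∑ i ∈ Ico k n, min k (D i) = (B - k) * k + ∑ i ∈ Ico B n, D i := by
            rw [← Finset.sum_Ico_consecutive (fun i => min k (D i)) (le_of_lt hkB)
              (show B ≤ n by omega)]
            congr 1
            · rw [Finset.sum_congr rfl (fun i hi => ?_), Finset.sum_const, Nat.card_Ico,
                smul_eq_mul]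
              rw [Finset.mem_Ico] at hi
              exact min_eq_left (le_of_lt (hBmin i hi.2))
            · apply Finset.sum_congr rfl
              intro i hi
              rw [Finset.mem_Ico] at hi
              have := hanti B i hi.1
              exact min_eq_right (by omega)
          have hTail : (n - B) * m ≤ ∑ i ∈ Ico B n, D i := by
            calc (n - B) * m = ∑ _i ∈ Ico B n, m := by
                  rw [Finset.sum_const, Nat.card_Ico, smul_eq_mul]
              _ ≤ ∑ i ∈ Ico B n, D i := by
                  apply Finset.sum_le_sum
                  intro i hi
                  rw [Finset.mem_Ico] at hi
                  have := hanti i (n-1) (by omega)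
                  omega
          have hLsplit : ∑ i ∈ range k, D i = ∑ i ∈ range A, D i + (k - A) * θ := by
            rw [← Finset.sum_range_add_sum_Ico D (le_of_lt hAk)]
            congr 1
            rw [Finset.sum_congr rfl (fun i hi => ?_), Finset.sum_const, Nat.card_Ico,
              smul_eq_mul]
            rw [Finset.mem_Ico] at hi
            exact hclass i hi.1 (by omega)
          have hLA : ∑ i ∈ range A, D i ≤ A * (n-1) := by
            calc ∑ i ∈ range A, D i ≤ ∑ _i ∈ range A, (n-1) :=
                Finset.sum_le_sum (fun i _ => hd1 i)
              _ = A * (n-1) := by rw [Finset.sum_const, Finset.card_range, smul_eq_mul]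
          have hskA : A ≤ sk := by
            have hsub : range A ⊆ S ∩ range k := by
              intro i hi
              rw [Finset.mem_range] at hi
              exact Finset.mem_inter.2 ⟨(hSmem i).2 (Or.inl hi), Finset.mem_range.2 (by omega)⟩
            calc A = (range A).card := (Finset.card_range A).symm
              _ ≤ sk := Finset.card_le_card hsub
          have hminm : min k m = m := min_eq_right hmk
          rcases lt_or_ge θ B with hθB | hBθ
          · -- 2b-i : θ < B
            rw [hminm, hTsplit]
            exact eg_comb_2bi _ _ _ _ A θ m k B n sk hLsplit hLA rfl hTail hskA
              hAmlt hmk hkB hθB (by omega)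
          · -- 2b-ii : B ≤ θ
            have hqnb : qn + k ≤ bp + 1 := by
              have hsub : S \ range k ⊆ Icc k bp := by
                intro x hx
                rw [Finset.mem_sdiff, Finset.mem_range] at hx
                exact Finset.mem_Icc.2 ⟨by omega, hSbp x hx.1⟩
              have h1 : qn ≤ (Icc k bp).card := Finset.card_le_card hsub
              rw [Nat.card_Icc] at h1
              omega
            have hegb := hEGn (bp+1) (by omega) (by omega)
            have hLb : ∑ i ∈ range (bp+1), D i = ∑ i ∈ range k, D i + (bp+1-k) * θ := by
              rw [← Finset.sum_range_add_sum_Ico D (show k ≤ bp+1 by omega)]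
              congr 1
              rw [Finset.sum_congr rfl (fun i hi => ?_), Finset.sum_const, Nat.card_Ico,
                smul_eq_mul]
              rw [Finset.mem_Ico] at hi
              exact hclass i (by omega) (by omega)
            have hTb : ∑ i ∈ Ico (bp+1) n, min (bp+1) (D i)
                ≤ (B - (bp+1)) * (bp+1) + ∑ i ∈ Ico B n, D i := by
              rw [← Finset.sum_Ico_consecutive (fun i => min (bp+1) (D i))
                (show bp+1 ≤ B by omega) (show B ≤ n by omega)]
              apply Nat.add_le_add
              · calc ∑ i ∈ Ico (bp+1) B, min (bp+1) (D i)
                    ≤ ∑ _i ∈ Ico (bp+1) B, (bp+1) :=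
                      Finset.sum_le_sum (fun i _ => min_le_left _ _)
                  _ = (B - (bp+1)) * (bp+1) := by
                      rw [Finset.sum_const, Nat.card_Ico, smul_eq_mul]
              · apply le_of_eq
                apply Finset.sum_congr rfl
                intro i hi
                rw [Finset.mem_Ico] at hi
                have := hanti B i hi.1
                exact min_eq_right (by omega)
            have hegb2 : ∑ i ∈ range k, D i + (bp+1-k) * θ
                ≤ (bp+1) * ((bp+1) - 1) + ((B - (bp+1)) * (bp+1) + ∑ i ∈ Ico B n, D i) := by
              calc ∑ i ∈ range k, D i + (bp+1-k) * θ = ∑ i ∈ range (bp+1), D i := hLb.symm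
                _ ≤ (bp+1) * ((bp+1) - 1) + ∑ i ∈ Ico (bp+1) n, min (bp+1) (D i) := hegb
                _ ≤ _ := Nat.add_le_add_left hTb _
            rw [hminm, hTsplit]
            exact eg_core_2bii _ _ bp θ m k B qn sk hegb2 hqnb hskqn hBθ hkB hk1 hbpB
    · -- BRANCH B : θ ≤ k
      have hmk : m ≤ k := le_trans hmθ hθk
      have hAk : A < k := by omega
      have hDk : ∀ i, k ≤ i → D i ≤ k := by
        intro i hik
        have h1 := hanti k i hik
        rcases le_or_gt k bp with h2 | h2
        · have := hclass k (by omega) h2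
          omega
        · rcases le_or_gt k (n-2) with h3 | h3
          · have := hbpmax k h2 h3
            omega
          · have := hanti (n-1) k (by omega)
            omega
      have hE2 : ∑ i ∈ Ico k n, min k (D i) = ∑ i ∈ Ico k n, D i :=
        Finset.sum_congr rfl (fun i hi => min_eq_right (hDk i (Finset.mem_Ico.1 hi).1))
      have hE2' : ∑ i ∈ Ico k n, min k (D' i) = ∑ i ∈ Ico k n, D' i :=
        Finset.sum_congr rfl (fun i hi =>
          min_eq_right (le_trans (hD'le i) (hDk i (Finset.mem_Ico.1 hi).1)))
      have hqd : ∑ i ∈ Ico k n, D i = (∑ i ∈ Ico k n, D' i) + (qn + m) := by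
        have h1 : ∀ i ∈ Ico k n, D i
            = D' i + ((if i ∈ S then 1 else 0) + (if i = n-1 then m else 0)) :=
          fun i _ => hDD' i
        rw [Finset.sum_congr rfl h1, Finset.sum_add_distrib, Finset.sum_add_distrib]
        congr 1
        congr 1
        · rw [Finset.sum_ite_mem, Finset.sum_const, smul_eq_mul, mul_one]
          have hseteq : Ico k n ∩ S = S \ range k := by
            ext x
            simp only [Finset.mem_inter, Finset.mem_Ico, Finset.mem_sdiff, Finset.mem_range]
            rw [hSmem x]
            omega
          rw [hseteq]
        · rw [Finset.sum_ite_eq' (Ico k n) (n-1) (fun _ => m)]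
          rw [if_pos (Finset.mem_Ico.2 ⟨by omega, by omega⟩)]
      rw [hE2']
      suffices hGB : ∑ i ∈ range k, D i + 2 * qn ≤ k * (k-1) + ∑ i ∈ Ico k n, D i by
        omega
      by_cases hqn0 : qn = 0
      · have h := hEGn k hk1 (by omega)
        rw [hE2] at h
        omega
      have hkbp : k ≤ bp := by
        have hpos' : 0 < (S \ range k).card := by omega
        obtain ⟨x, hx⟩ := Finset.card_pos.1 hpos'
        rw [Finset.mem_sdiff, Finset.mem_range] at hx
        have := hSbp x hx.1
        omega
      -- parity
      have hNn : ∑ i ∈ range p, D i = ∑ i ∈ range n, D i := by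
        symm
        apply Finset.sum_subset (Finset.range_subset_range.2 hnp)
        intro x _ hnx
        rw [Finset.mem_range] at hnx
        exact hzero x (by omega)
      have hsplitall : ∑ i ∈ range n, D i = ∑ i ∈ range k, D i + ∑ i ∈ Ico k n, D i :=
        (Finset.sum_range_add_sum_Ico D (le_of_lt hkn)).symm
      have hevenkn : Even (∑ i ∈ range k, D i + ∑ i ∈ Ico k n, D i) := by
        rw [← hsplitall, ← hNn]
        exact heven
      -- bound on qn
      have hqnQ : qn + max lo θ ≤ bp + 1 := by
        have hset : S \ range k = Icc (max lo k) bp := by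
          ext x
          simp only [Finset.mem_sdiff, Finset.mem_range, Finset.mem_Icc]
          rw [hSmem x]
          omega
        rw [hqndef, hset, Nat.card_Icc]
        omega
      -- sum decompositions
      have hRk : ∑ i ∈ range k, D i = ∑ i ∈ range A, D i + (k - A) * θ := by
        rw [← Finset.sum_range_add_sum_Ico D (le_of_lt hAk)]
        congr 1
        rw [Finset.sum_congr rfl (fun i hi => ?_), Finset.sum_const, Nat.card_Ico,
          smul_eq_mul]
        rw [Finset.mem_Ico] at hi
        exact hclass i hi.1 (by omega)
      have hRA : ∑ i ∈ range A, D i ≤ A * (n-1) := by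
        calc ∑ i ∈ range A, D i ≤ ∑ _i ∈ range A, (n-1) :=
            Finset.sum_le_sum (fun i _ => hd1 i)
          _ = A * (n-1) := by rw [Finset.sum_const, Finset.card_range, smul_eq_mul]
      have hT : (bp+1-k)*θ + (n-(bp+1))*m ≤ ∑ i ∈ Ico k n, D i := by
        rw [← Finset.sum_Ico_consecutive D (show k ≤ bp+1 by omega) (show bp+1 ≤ n by omega)]
        apply Nat.add_le_add
        · apply le_of_eq
          symm
          rw [Finset.sum_congr rfl (fun i hi => ?_), Finset.sum_const, Nat.card_Ico,
            smul_eq_mul]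
          rw [Finset.mem_Ico] at hi
          exact hclass i (by omega) (by omega)
        · have h1 : ∑ _i ∈ Ico (bp+1) n, m ≤ ∑ i ∈ Ico (bp+1) n, D i := by
            apply Finset.sum_le_sum
            intro i hi
            rw [Finset.mem_Ico] at hi
            have := hanti i (n-1) (by omega)
            omega
          have h2 : ∑ _i ∈ Ico (bp+1) n, m = (n-(bp+1)) * m := by
            rw [Finset.sum_const, Nat.card_Ico, smul_eq_mul]
          omega
      exact eg_core_B _ _ _ A θ m k n bp qn hRk hRA hT hevenkn
        (by omega) (by omega) hAmlt hmθ hθk hkbp (by omega) hk1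

lemma eg_aux : ∀ (N p : ℕ) (D : ℕ → ℕ),
    (∀ i j, i ≤ j → D j ≤ D i) → (∀ i, p ≤ i → D i = 0) →
    (∑ i ∈ Finset.range p, D i = N) → Even N →
    (∀ k, 1 ≤ k → k ≤ p →
      ∑ i ∈ Finset.range k, D i ≤ k * (k - 1) + ∑ i ∈ Finset.Ico k p, min k (D i)) →
    ∃ G : SimpleGraph (Fin p), ∀ i : Fin p, (G.neighborSet i).ncard = D (i : ℕ) := by
  intro N
  induction N using Nat.strong_induction_on with
  | _ N IH =>
    intro p D hanti hDp hsum heven hEG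
    by_cases hall : ∀ i, D i = 0
    · refine ⟨⊥, fun i => ?_⟩
      have : (⊥ : SimpleGraph (Fin p)).neighborSet i = ∅ := by
        ext y; simp
      rw [this, hall]
      simp
    · push_neg at hall
      have hex : ∃ i, D i = 0 := ⟨p, hDp p le_rfl⟩
      classical
      set n := Nat.find hex with hn
      have hn0 : D n = 0 := Nat.find_spec hex
      have hnmin : ∀ i, i < n → D i ≠ 0 := fun i hi => Nat.find_min hex hi
      have hnp : n ≤ p := by
        by_contra h
        push_neg at h
        exact hnmin p h (hDp p le_rfl)
      have hpos : ∀ i, i < n → 1 ≤ D i := fun i hi => Nat.one_le_iff_ne_zero.2 (hnmin i hi)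
      have hzero : ∀ i, n ≤ i → D i = 0 := fun i hi => Nat.le_zero.1 (hn0 ▸ hanti n i hi)
      have hn1 : 1 ≤ n := by
        rcases Nat.eq_zero_or_pos n with h | h
        · obtain ⟨j, hj⟩ := hall
          exact absurd (hzero j (h ▸ Nat.zero_le j)) hj
        · exact h
      have hn2 : 2 ≤ n := by
        by_contra hcon
        have hne : n = 1 := by omega
        have h1 := hEG 1 le_rfl (by omega)
        have ht : ∑ i ∈ Ico 1 p, min 1 (D i) = 0 := by
          apply Finset.sum_eq_zero
          intro i hi
          rw [hzero i (by rw [hne]; exact (Finset.mem_Ico.1 hi).1)]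
          simp
        rw [ht] at h1
        simp at h1
        exact hnmin 0 (by omega) h1
      set m := D (n-1) with hm
      have hm1 : 1 ≤ m := hpos (n-1) (by omega)
      obtain ⟨S, D', hScard, hSlt, hSpos, hD'def, hD'anti, hD'zero, hD'sum, hD'EG⟩ :=
        eg_reduce p n m D hanti hn2 hnp hzero hpos rfl hm1 (hsum ▸ heven) hEG
      have h2mN : 2 * m ≤ N := by omega
      have hsum' : ∑ i ∈ range p, D' i = N - 2 * m := by omega
      have hlt : N - 2 * m < N := by omega
      have heven' : Even (N - 2 * m) := by
        rcases heven with ⟨t, ht⟩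
        exact ⟨t - m, by omega⟩
      obtain ⟨G', hG'⟩ := IH (N - 2*m) hlt p D' hD'anti hD'zero hsum' heven' hD'EG
      have hn1p : n - 1 < p := by omega
      set i0 : Fin p := ⟨n-1, hn1p⟩ with hi0
      set Sf : Finset (Fin p) := Finset.univ.filter (fun i : Fin p => (i : ℕ) ∈ S) with hSf
      have hSfcard : Sf.card = m := by
        rw [← hScard]
        apply Finset.card_bij (fun (i : Fin p) _ => (i : ℕ))
        · intro a ha
          simp only [hSf, Finset.mem_filter, Finset.mem_univ, true_and] at ha
          exact ha
        · intro a _ b _ hab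
          exact Fin.val_injective hab
        · intro b hb
          have hblt : b < p := lt_of_lt_of_le (by have := hSlt b hb; omega) hnp
          exact ⟨⟨b, hblt⟩, by simp [hSf, hb], rfl⟩
      have hi0S : i0 ∉ Sf := by
        simp only [hSf, Finset.mem_filter, Finset.mem_univ, true_and]
        intro hc
        have := hSlt _ hc
        simp only [hi0] at this
        omega
      have hiso : G'.neighborSet i0 = ∅ := by
        have h0 : (G'.neighborSet i0).ncard = 0 := by
          rw [hG' i0]
          simp only [hi0]
          rw [hD'def]
          have : (n-1 : ℕ) ∉ S := fun hc => by have := hSlt _ hc; omega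
          simp [this]
        exact (Set.ncard_eq_zero (Set.toFinite _)).1 h0
      obtain ⟨H, hH⟩ := eg_graph_step G' i0 Sf hi0S hiso
      refine ⟨H, fun x => ?_⟩
      rw [hH x, hG' x]
      by_cases hx : x = i0
      · subst hx
        simp only [if_pos rfl, hSfcard]
        rw [hD'def]
        have h1 : (n-1 : ℕ) ∉ S := fun hc => by have := hSlt _ hc; omega
        simp only [hi0]
        simp [h1, ← hm]
      · have hxi : (x : ℕ) ≠ n - 1 := by
          intro hc
          exact hx (Fin.ext (by simpa [hi0] using hc))
        by_cases hxS : (x : ℕ) ∈ S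
        · have hmem : x ∈ Sf := by simp [hSf, hxS]
          simp only [if_neg hx, if_pos hmem]
          rw [hD'def]
          have := hSpos _ hxS
          simp only [if_pos hxS]
          omega
        · have hmem : x ∉ Sf := by simp [hSf, hxS]
          simp only [if_neg hx, if_neg hmem]
          rw [hD'def]
          simp [hxS, hxi]

end ErdosGallaiAux

/-- Erdős–Gallai (sufficiency): a nonincreasing sequence `d 1 ≥ … ≥ d p` of nonnegative
integers with even sum satisfying the Erdős–Gallai inequalities is graphic. -/
theorem erdos_gallai_sufficiency (p : ℕ) (d : Fin p → ℕ)
    (hmono : ∀ i j : Fin p, i ≤ j → d j ≤ d i)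
    (heven : Even (∑ i, d i))
    (hEG : ∀ k : ℕ, 1 ≤ k → k ≤ p →
      ∑ i ∈ Finset.univ.filter (fun i : Fin p => (i : ℕ) < k), d i
        ≤ k * (k - 1)
          + ∑ i ∈ Finset.univ.filter (fun i : Fin p => k ≤ (i : ℕ)), min k (d i)) :
    ∃ G : SimpleGraph (Fin p), ∀ i : Fin p, (G.neighborSet i).ncard = d i := by
  classical
  set D : ℕ → ℕ := fun i => if h : i < p then d ⟨i, h⟩ else 0 with hD
  have hDval : ∀ i : Fin p, D (i : ℕ) = d i := by
    intro i
    simp [hD, i.isLt]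
  have hanti : ∀ i j, i ≤ j → D j ≤ D i := by
    intro i j hij
    simp only [hD]
    split_ifs with h1 h2
    · exact hmono ⟨i, h2⟩ ⟨j, h1⟩ hij
    · omega
    · exact Nat.zero_le _
    · exact le_rfl
  have hDp : ∀ i, p ≤ i → D i = 0 := by
    intro i hi
    simp only [hD]
    rw [dif_neg (by omega)]
  have hsumN : ∑ i ∈ range p, D i = ∑ i, d i := by
    rw [← Fin.sum_univ_eq_sum_range D p]
    exact Finset.sum_congr rfl (fun i _ => hDval i)
  have hEGN : ∀ k, 1 ≤ k → k ≤ p →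
      ∑ i ∈ range k, D i ≤ k * (k - 1) + ∑ i ∈ Ico k p, min k (D i) := by
    intro k hk1 hkp
    have hL := eg_sum_fin_lt p k hkp (fun j => D j)
    have hT := eg_sum_fin_ge p k (fun j => min k (D j))
    have h1 := hEG k hk1 hkp
    rw [← hL, ← hT]
    calc ∑ i ∈ Finset.univ.filter (fun i : Fin p => (i : ℕ) < k), D (i:ℕ)
        = ∑ i ∈ Finset.univ.filter (fun i : Fin p => (i : ℕ) < k), d i :=
          Finset.sum_congr rfl (fun i _ => hDval i)
      _ ≤ k * (k-1) + ∑ i ∈ Finset.univ.filter (fun i : Fin p => k ≤ (i : ℕ)), min k (d i) := h1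
      _ = k * (k-1) + ∑ i ∈ Finset.univ.filter (fun i : Fin p => k ≤ (i : ℕ)), min k (D (i:ℕ)) := by
          refine congrArg _ (Finset.sum_congr rfl (fun i _ => ?_))
          rw [hDval i]
  obtain ⟨G, hG⟩ := eg_aux (∑ i ∈ range p, D i) p D hanti hDp rfl (hsumN ▸ heven) hEGN
  exact ⟨G, fun i => (hG i).trans (hDval i)⟩
end

section
/- If a finite tree T with p ≥ 2 vertices, q = p − 1 edges and bipartition (X, Y) admits a set-ordered graceful labelling with respect to (X, Y), then T admits a set-ordered odd-graceful labelling with respect to (X, Y). -/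
/-- The induced edge label `|f u - f v|` for a vertex labelling `f`. -/
def elabel {V : Type*} (f : V → ℕ) (u v : V) : ℕ :=
  max (f u) (f v) - min (f u) (f v)

/-- `(X, Y)` is a bipartition of the graph `G`: the two parts cover all vertices,
are disjoint, and every edge joins a vertex of `X` to a vertex of `Y`. -/
def IsBipartitionOf {V : Type*} (G : SimpleGraph V) (X Y : Finset V) : Prop :=
  (∀ v : V, v ∈ X ∨ v ∈ Y) ∧ (∀ v : V, ¬(v ∈ X ∧ v ∈ Y)) ∧
    ∀ ⦃u v : V⦄, G.Adj u v → (u ∈ X ∧ v ∈ Y) ∨ (u ∈ Y ∧ v ∈ X)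

/-- `f` is a set-ordered graceful labelling of `G` (with `q` edges) with respect to the
bipartition `(X, Y)`: `f` is injective into `{0,…,q}`, the induced edge labels
`|f u - f v|` are pairwise distinct and form exactly `{1,…,q}`, and every label on `X`
is smaller than every label on `Y`. -/
def IsSetOrderedGraceful {V : Type*} (G : SimpleGraph V) (X Y : Finset V) (q : ℕ)
    (f : V → ℕ) : Prop :=
  Function.Injective f ∧ (∀ v : V, f v ≤ q) ∧
    (∀ u v u' v' : V, G.Adj u v → G.Adj u' v' →
      elabel f u v = elabel f u' v' → s(u, v) = s(u', v')) ∧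
    (∀ u v : V, G.Adj u v → 1 ≤ elabel f u v ∧ elabel f u v ≤ q) ∧
    (∀ m : ℕ, 1 ≤ m → m ≤ q → ∃ u v : V, G.Adj u v ∧ elabel f u v = m) ∧
    (∀ x ∈ X, ∀ y ∈ Y, f x < f y)

/-- `f` is a set-ordered odd-graceful labelling of `G` (with `q` edges) with respect to
the bipartition `(X, Y)`: `f` is injective into `{0,…,2q-1}`, the induced edge labels
`|f u - f v|` are pairwise distinct and form exactly the odd numbers `{1,3,…,2q-1}`,
and every label on `X` is smaller than every label on `Y`. -/
def IsSetOrderedOddGraceful {V : Type*} (G : SimpleGraph V) (X Y : Finset V) (q : ℕ)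
    (f : V → ℕ) : Prop :=
  Function.Injective f ∧ (∀ v : V, f v ≤ 2 * q - 1) ∧
    (∀ u v u' v' : V, G.Adj u v → G.Adj u' v' →
      elabel f u v = elabel f u' v' → s(u, v) = s(u', v')) ∧
    (∀ u v : V, G.Adj u v → Odd (elabel f u v) ∧ elabel f u v ≤ 2 * q - 1) ∧
    (∀ m : ℕ, Odd m → m ≤ 2 * q - 1 → ∃ u v : V, G.Adj u v ∧ elabel f u v = m) ∧
    (∀ x ∈ X, ∀ y ∈ Y, f x < f y)

/-!
Double every label and pull the labels on `Y` down by one: `g x = 2 f x` on `X` and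
`g y = 2 f y - 1` on `Y`. Since every edge goes from a smaller label in `X` to a larger one
in `Y`, an edge label `e` of `f` becomes `2 e - 1` under `g`, which maps `{1, …, q}`
bijectively onto the odd numbers up to `2 q - 1`. Labels on `X` stay even and those on `Y`
become odd, so `g` is still injective, and the order between `X` and `Y` is preserved.
-/

section Labelling

variable {V : Type*}

theorem elabel_comm (f : V → ℕ) (u v : V) : elabel f u v = elabel f v u := by
  simp only [elabel, max_comm, min_comm]

theorem elabel_of_le {f : V → ℕ} {u v : V} (h : f u ≤ f v) : elabel f u v = f v - f u := by
  simp [elabel, h]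

theorem IsBipartitionOf.nonempty_of_adj {G : SimpleGraph V} {X Y : Finset V}
    (hbip : IsBipartitionOf G X Y) {u v : V} (huv : G.Adj u v) : X.Nonempty ∧ Y.Nonempty := by
  rcases hbip.2.2 huv with ⟨hu, hv⟩ | ⟨hu, hv⟩
  · exact ⟨⟨u, hu⟩, ⟨v, hv⟩⟩
  · exact ⟨⟨v, hv⟩, ⟨u, hu⟩⟩

theorem IsBipartitionOf.notMem_left {G : SimpleGraph V} {X Y : Finset V}
    (hbip : IsBipartitionOf G X Y) {y : V} (hy : y ∈ Y) : y ∉ X :=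
  fun hx ↦ hbip.2.1 y ⟨hx, hy⟩

section OddLabelling

variable [DecidableEq V] (X : Finset V) (f : V → ℕ)

def oddLabelling (v : V) : ℕ :=
  if v ∈ X then 2 * f v else 2 * f v - 1

variable {X f}

theorem oddLabelling_of_mem {x : V} (hx : x ∈ X) : oddLabelling X f x = 2 * f x := if_pos hx

theorem oddLabelling_of_notMem {y : V} (hy : y ∉ X) : oddLabelling X f y = 2 * f y - 1 :=
  if_neg hy

theorem elabel_oddLabelling {x y : V} (hx : x ∈ X) (hy : y ∉ X) (hxy : f x < f y) :
    elabel (oddLabelling X f) x y = 2 * elabel f x y - 1 := by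
  have hgx := oddLabelling_of_mem (f := f) hx
  have hgy := oddLabelling_of_notMem (f := f) hy
  rw [elabel_of_le hxy.le, elabel_of_le (by omega)]
  omega

end OddLabelling

namespace IsSetOrderedGraceful

variable {G : SimpleGraph V} {X Y : Finset V} {q : ℕ} {f : V → ℕ}

theorem exists_adj (hf : IsSetOrderedGraceful G X Y q f) (hq : 1 ≤ q) :
    ∃ u v, G.Adj u v := by
  obtain ⟨u, v, huv, -⟩ := hf.2.2.2.2.1 1 le_rfl hq
  exact ⟨u, v, huv⟩

section Bipartite

variable (hf : IsSetOrderedGraceful G X Y q f) (hbip : IsBipartitionOf G X Y) (hq : 1 ≤ q)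
include hf hbip hq

theorem lt_of_mem_left {x : V} (hx : x ∈ X) : f x < q := by
  obtain ⟨u, v, huv⟩ := hf.exists_adj hq
  obtain ⟨y, hy⟩ := (hbip.nonempty_of_adj huv).2
  exact (hf.2.2.2.2.2 x hx y hy).trans_le (hf.2.1 y)

theorem one_le_of_mem_right {y : V} (hy : y ∈ Y) : 1 ≤ f y := by
  obtain ⟨u, v, huv⟩ := hf.exists_adj hq
  obtain ⟨x, hx⟩ := (hbip.nonempty_of_adj huv).1
  exact Nat.one_le_of_lt (hf.2.2.2.2.2 x hx y hy)

omit hq in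
theorem elabel_oddLabelling_of_adj [DecidableEq V] ⦃u v : V⦄ (huv : G.Adj u v) :
    elabel (oddLabelling X f) u v = 2 * elabel f u v - 1 := by
  rcases hbip.2.2 huv with ⟨hu, hv⟩ | ⟨hu, hv⟩
  · exact elabel_oddLabelling hu (hbip.notMem_left hv) (hf.2.2.2.2.2 u hu v hv)
  · rw [elabel_comm, elabel_comm f]
    exact elabel_oddLabelling hv (hbip.notMem_left hu) (hf.2.2.2.2.2 v hv u hu)

theorem injective_oddLabelling [DecidableEq V] : Function.Injective (oddLabelling X f) := by
  intro u v huv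
  -- labels on `X` are even and labels on `Y` are odd
  rcases hbip.1 u with hu | hu <;> rcases hbip.1 v with hv | hv
  · rw [oddLabelling_of_mem hu, oddLabelling_of_mem hv] at huv
    exact hf.1 (by omega)
  · have := hf.one_le_of_mem_right hbip hq hv
    rw [oddLabelling_of_mem hu, oddLabelling_of_notMem (hbip.notMem_left hv)] at huv
    omega
  · have := hf.one_le_of_mem_right hbip hq hu
    rw [oddLabelling_of_notMem (hbip.notMem_left hu), oddLabelling_of_mem hv] at huv
    omega
  · have := hf.one_le_of_mem_right hbip hq hu
    have := hf.one_le_of_mem_right hbip hq hv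
    rw [oddLabelling_of_notMem (hbip.notMem_left hu),
      oddLabelling_of_notMem (hbip.notMem_left hv)] at huv
    exact hf.1 (by omega)

theorem oddLabelling_le [DecidableEq V] (v : V) : oddLabelling X f v ≤ 2 * q - 1 := by
  rcases hbip.1 v with hv | hv
  · have := hf.lt_of_mem_left hbip hq hv
    rw [oddLabelling_of_mem hv]
    omega
  · have := hf.2.1 v
    rw [oddLabelling_of_notMem (hbip.notMem_left hv)]
    omega

theorem isSetOrderedOddGraceful_oddLabelling [DecidableEq V] :
    IsSetOrderedOddGraceful G X Y q (oddLabelling X f) := by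
  have hlabel := hf.elabel_oddLabelling_of_adj hbip
  obtain ⟨-, -, hdistinct, hrange, hsurj, hord⟩ := id hf
  refine ⟨hf.injective_oddLabelling hbip hq, hf.oddLabelling_le hbip hq, ?_, ?_, ?_, ?_⟩
  · intro u v u' v' huv hu'v' heq
    have := hrange u v huv
    have := hrange u' v' hu'v'
    rw [hlabel huv, hlabel hu'v'] at heq
    exact hdistinct u v u' v' huv hu'v' (by omega)
  · intro u v huv
    have := hrange u v huv
    rw [hlabel huv]
    exact ⟨⟨elabel f u v - 1, by omega⟩, by omega⟩
  · rintro m ⟨k, rfl⟩ hm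
    obtain ⟨u, v, huv, hk⟩ := hsurj (k + 1) (by omega) (by omega)
    exact ⟨u, v, huv, by rw [hlabel huv, hk]; omega⟩
  · intro x hx y hy
    have := hord x hx y hy
    rw [oddLabelling_of_mem hx, oddLabelling_of_notMem (hbip.notMem_left hy)]
    omega

end Bipartite

end IsSetOrderedGraceful

end Labelling

theorem setOrderedGraceful_to_setOrderedOddGraceful_general {V : Type*} [DecidableEq V]
    (G : SimpleGraph V)
    (p : ℕ) (hp2 : 2 ≤ p)
    (X Y : Finset V) (hbip : IsBipartitionOf G X Y)
    (f : V → ℕ) (hf : IsSetOrderedGraceful G X Y (p - 1) f) :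
    ∃ g : V → ℕ, IsSetOrderedOddGraceful G X Y (p - 1) g :=
  ⟨oddLabelling X f, hf.isSetOrderedOddGraceful_oddLabelling hbip (by omega)⟩

/-- A finite tree with `p ≥ 2` vertices and `q = p - 1` edges admitting a set-ordered
graceful labelling with respect to a bipartition `(X, Y)` admits a set-ordered
odd-graceful labelling with respect to `(X, Y)`. -/
theorem setOrderedGraceful_to_setOrderedOddGraceful {V : Type*} [Fintype V] [DecidableEq V]
    (G : SimpleGraph V) (hT : G.IsTree)
    (p : ℕ) (hp : Fintype.card V = p) (hp2 : 2 ≤ p)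
    (X Y : Finset V) (hbip : IsBipartitionOf G X Y)
    (f : V → ℕ) (hf : IsSetOrderedGraceful G X Y (p - 1) f) :
    ∃ g : V → ℕ, IsSetOrderedOddGraceful G X Y (p - 1) g :=
  setOrderedGraceful_to_setOrderedOddGraceful_general G p hp2 X Y hbip f hf
end

section
/- If a finite tree T with p ≥ 2 vertices, q = p − 1 edges and bipartition (X, Y) admits a set-ordered graceful labelling with respect to (X, Y), then there exists a bijection g from V(T) ∪ E(T) onto {1, 2, …, p + q} with g(V(T)) = {1, …, p} and max_{x ∈ X} g(x) < min_{y ∈ Y} g(y), satisfying: (i) g(uv) + |g(u) − g(v)| = p + q + 1 for every edge uv of T; (ii) for every edge uv of T there exists an edge u'v' of T with g(uv) = p + |g(u') − g(v')|; and (iii) for every edge uv of T there exists a vertex w of T with g(uv) + g(w) = p + q + 1. -/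
/-! Shift the graceful labelling up by one on vertices and give the edge `uv` the label
`p + q + 1 - |f u - f v|`. Since `f` is a bijection onto `{0, …, q}` and the edge labels of `f`
fill `{1, …, q}`, the vertex labels fill `{1, …, p}` and the edge labels fill `{p + 1, …, p + q}`;
then (ii) holds because `k ↦ q + 1 - k` permutes `{1, …, q}`, and (iii) because `k ↦ k - 1` maps
`{1, …, q}` into the labels `{0, …, q}` of `f`. -/

section Labelling

variable {V : Type*}

theorem elabel_add_const (f : V → ℕ) (c : ℕ) (u v : V) :
    elabel (fun w => f w + c) u v = elabel f u v := by
  simp only [elabel]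
  omega

def complEdgeLabel (N : ℕ) (f : V → ℕ) : Sym2 V → ℕ :=
  Sym2.lift ⟨fun u v => N - elabel f u v, fun u v => by simp only [elabel_comm f u v]⟩

@[simp]
theorem complEdgeLabel_mk (N : ℕ) (f : V → ℕ) (u v : V) :
    complEdgeLabel N f s(u, v) = N - elabel f u v :=
  rfl

theorem exists_eq_of_injective_of_lt_card [Fintype V] {f : V → ℕ} (hinj : Function.Injective f)
    (hlt : ∀ v, f v < Fintype.card V) {m : ℕ} (hm : m < Fintype.card V) : ∃ v, f v = m := by
  have himage : Finset.univ.image f = Finset.range (Fintype.card V) :=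
    Finset.eq_of_subset_of_card_le (fun _ hk => by
      obtain ⟨v, -, rfl⟩ := Finset.mem_image.1 hk
      exact Finset.mem_range.2 (hlt v))
      (by rw [Finset.card_range, Finset.card_image_of_injective _ hinj, Finset.card_univ])
  have hmem : m ∈ Finset.univ.image f := by rw [himage]; exact Finset.mem_range.2 hm
  simpa using hmem

end Labelling

theorem setOrderedGraceful_to_sixC_general {V : Type*} [Fintype V]
    (G : SimpleGraph V)
    (p : ℕ) (hp : Fintype.card V = p)
    (X Y : Finset V)
    (f : V → ℕ) (hf : IsSetOrderedGraceful G X Y (p - 1) f) :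
    ∃ (gv : V → ℕ) (ge : Sym2 V → ℕ),
      Function.Injective gv ∧ (∀ v : V, 1 ≤ gv v ∧ gv v ≤ p) ∧
      (∀ m : ℕ, 1 ≤ m → m ≤ p → ∃ v : V, gv v = m) ∧
      (∀ e ∈ G.edgeSet, ∀ e' ∈ G.edgeSet, ge e = ge e' → e = e') ∧
      (∀ e ∈ G.edgeSet, p + 1 ≤ ge e ∧ ge e ≤ p + (p - 1)) ∧
      (∀ m : ℕ, p + 1 ≤ m → m ≤ p + (p - 1) → ∃ e ∈ G.edgeSet, ge e = m) ∧
      (∀ x ∈ X, ∀ y ∈ Y, gv x < gv y) ∧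
      (∀ u v : V, G.Adj u v → ge s(u, v) + elabel gv u v = p + (p - 1) + 1) ∧
      (∀ u v : V, G.Adj u v →
        ∃ u' v' : V, G.Adj u' v' ∧ ge s(u, v) = p + elabel gv u' v') ∧
      (∀ u v : V, G.Adj u v → ∃ w : V, ge s(u, v) + gv w = p + (p - 1) + 1) := by
  obtain ⟨hinj, hle, hdist, hrange, hsurj, hord⟩ := hf
  have hlt (v : V) : f v < p := by
    have : 0 < Fintype.card V := Fintype.card_pos_iff.2 ⟨v⟩
    have := hle v
    omega
  have hvert (m : ℕ) (hm : m < p) : ∃ v, f v = m :=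
    exists_eq_of_injective_of_lt_card hinj (hp ▸ hlt) (hp ▸ hm)
  refine ⟨fun v => f v + 1, complEdgeLabel (p + (p - 1) + 1) f,
    fun a b hab => hinj (Nat.add_right_cancel hab), fun v => ⟨Nat.le_add_left 1 (f v), hlt v⟩, ?_, ?_, ?_, ?_,
    fun x hx y hy => Nat.add_lt_add_right (hord x hx y hy) 1, ?_, ?_, ?_⟩
  · intro m h1 hm
    obtain ⟨v, hv⟩ := hvert (m - 1) (by omega)
    exact ⟨v, by dsimp only; omega⟩
  · rintro ⟨u, v⟩ huv ⟨u', v'⟩ huv' h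
    have := (hrange u v huv).2
    have := (hrange u' v' huv').2
    exact hdist u v u' v' huv huv' (by simp only [complEdgeLabel_mk] at h; omega)
  · rintro ⟨u, v⟩ huv
    have := hrange u v huv
    simp only [complEdgeLabel_mk]
    omega
  · intro m h1 hm
    obtain ⟨u, v, huv, hel⟩ := hsurj (p + (p - 1) + 1 - m) (by omega) (by omega)
    exact ⟨s(u, v), huv, by simp only [complEdgeLabel_mk]; omega⟩
  · intro u v huv
    have := hrange u v huv
    simp only [complEdgeLabel_mk, elabel_add_const]
    omega
  · intro u v huv
    have := hrange u v huv
    obtain ⟨u', v', huv', hel'⟩ := hsurj (p - elabel f u v) (by omega) (by omega)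
    exact ⟨u', v', huv', by simp only [complEdgeLabel_mk, elabel_add_const, hel']; omega⟩
  · intro u v huv
    have := hrange u v huv
    obtain ⟨w, hw⟩ := hvert (elabel f u v - 1) (by omega)
    exact ⟨w, by simp only [complEdgeLabel_mk]; omega⟩

/-- A finite tree with `p ≥ 2` vertices and `q = p - 1` edges admitting a set-ordered
graceful labelling with respect to a bipartition `(X, Y)` admits a total labelling
`g`, a bijection from `V(T) ∪ E(T)` onto `{1,…,p+q}` with `g(V(T)) = {1,…,p}` and
set-ordered on vertices, such that (i) `g(uv) + |g(u) - g(v)| = p + q + 1` for every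
edge `uv`; (ii) for every edge `uv` there is an edge `u'v'` with
`g(uv) = p + |g(u') - g(v')|`; (iii) for every edge `uv` there is a vertex `w` with
`g(uv) + g(w) = p + q + 1`. -/
theorem setOrderedGraceful_to_sixC {V : Type*} [Fintype V] [DecidableEq V]
    (G : SimpleGraph V) (hT : G.IsTree)
    (p : ℕ) (hp : Fintype.card V = p) (hp2 : 2 ≤ p)
    (X Y : Finset V) (hbip : IsBipartitionOf G X Y)
    (f : V → ℕ) (hf : IsSetOrderedGraceful G X Y (p - 1) f) :
    ∃ (gv : V → ℕ) (ge : Sym2 V → ℕ),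
      Function.Injective gv ∧ (∀ v : V, 1 ≤ gv v ∧ gv v ≤ p) ∧
      (∀ m : ℕ, 1 ≤ m → m ≤ p → ∃ v : V, gv v = m) ∧
      (∀ e ∈ G.edgeSet, ∀ e' ∈ G.edgeSet, ge e = ge e' → e = e') ∧
      (∀ e ∈ G.edgeSet, p + 1 ≤ ge e ∧ ge e ≤ p + (p - 1)) ∧
      (∀ m : ℕ, p + 1 ≤ m → m ≤ p + (p - 1) → ∃ e ∈ G.edgeSet, ge e = m) ∧
      (∀ x ∈ X, ∀ y ∈ Y, gv x < gv y) ∧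
      (∀ u v : V, G.Adj u v → ge s(u, v) + elabel gv u v = p + (p - 1) + 1) ∧
      (∀ u v : V, G.Adj u v →
        ∃ u' v' : V, G.Adj u' v' ∧ ge s(u, v) = p + elabel gv u' v') ∧
      (∀ u v : V, G.Adj u v → ∃ w : V, ge s(u, v) + gv w = p + (p - 1) + 1) :=
  setOrderedGraceful_to_sixC_general G p hp X Y f hf
end

section
/- Let T be a finite tree with p ≥ 2 vertices, q = p − 1 edges and bipartition (X, Y). If there exists a bijection g from V(T) ∪ E(T) onto {1, 2, …, p + q} with g(V(T)) = {1, …, p}, max_{x ∈ X} g(x) < min_{y ∈ Y} g(y), and g(uv) + |g(u) − g(v)| = p + q + 1 for every edge uv of T, then T admits a set-ordered graceful labelling with respect to (X, Y). -/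
/-!
Reading the magic condition `g(uv) + |g(u) - g(v)| = p + q + 1` backwards, the vertex
labelling `g` induces the edge labels `p + q + 1 - g(uv)`, and as `g(uv)` runs bijectively
over `{p + 1, …, p + q}` these run bijectively over `{1, …, q}`. So `g` is already graceful
up to the offset of its vertex labels `{1, …, p}`, and `g - 1` is the required labelling:
translating all vertex labels changes neither the edge labels nor the set-ordering.
-/

section

variable {V : Type*}

lemma elabel_sub_const (f : V → ℕ) {c : ℕ} (hc : ∀ v, c ≤ f v) :
    elabel (fun w => f w - c) = elabel f := by
  funext u v
  have := hc u
  have := hc v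
  simp only [elabel]
  omega

def HasGracefulEdgeLabels (G : SimpleGraph V) (q : ℕ) (f : V → ℕ) : Prop :=
  (∀ u v u' v' : V, G.Adj u v → G.Adj u' v' →
      elabel f u v = elabel f u' v' → s(u, v) = s(u', v')) ∧
    (∀ u v : V, G.Adj u v → 1 ≤ elabel f u v ∧ elabel f u v ≤ q) ∧
    (∀ m : ℕ, 1 ≤ m → m ≤ q → ∃ u v : V, G.Adj u v ∧ elabel f u v = m)

namespace HasGracefulEdgeLabels

variable {G : SimpleGraph V} {q : ℕ} {f : V → ℕ}

lemma sub_const (hf : HasGracefulEdgeLabels G q f) {c : ℕ} (hc : ∀ v, c ≤ f v) :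
    HasGracefulEdgeLabels G q (fun w => f w - c) := by
  rwa [HasGracefulEdgeLabels, elabel_sub_const f hc]

lemma of_magic (ge : Sym2 V → ℕ) {a : ℕ}
    (hgeinj : ∀ e ∈ G.edgeSet, ∀ e' ∈ G.edgeSet, ge e = ge e' → e = e')
    (hgemem : ∀ e ∈ G.edgeSet, a + 1 ≤ ge e ∧ ge e ≤ a + q)
    (hgesurj : ∀ m : ℕ, a + 1 ≤ m → m ≤ a + q → ∃ e ∈ G.edgeSet, ge e = m)
    (hmagic : ∀ u v : V, G.Adj u v → ge s(u, v) + elabel f u v = a + q + 1) :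
    HasGracefulEdgeLabels G q f := by
  refine ⟨fun u v u' v' huv hu'v' heq => ?_, fun u v huv => ?_, fun m hm1 hmq => ?_⟩
  · have := hmagic u v huv
    have := hmagic u' v' hu'v'
    exact hgeinj _ huv _ hu'v' (by omega)
  · have := hmagic u v huv
    have := hgemem s(u, v) huv
    omega
  · obtain ⟨e, he, hge⟩ := hgesurj (a + q + 1 - m) (by omega) (by omega)
    induction e using Sym2.ind with
    | _ u v =>
      have := hmagic u v he
      exact ⟨u, v, he, by omega⟩

end HasGracefulEdgeLabels

lemma isSetOrderedGraceful_sub_const {G : SimpleGraph V} {X Y : Finset V} {q c : ℕ}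
    {f : V → ℕ} (hinj : Function.Injective f) (hmem : ∀ v, c ≤ f v ∧ f v ≤ c + q)
    (hedge : HasGracefulEdgeLabels G q f) (hord : ∀ x ∈ X, ∀ y ∈ Y, f x < f y) :
    IsSetOrderedGraceful G X Y q (fun v => f v - c) := by
  obtain ⟨hlabel_inj, hlabel_mem, hlabel_surj⟩ := hedge.sub_const fun v => (hmem v).1
  refine ⟨fun u v huv => hinj ?_, fun v => ?_, hlabel_inj, hlabel_mem, hlabel_surj,
    fun x hx y hy => ?_⟩
  · have := hmem u
    have := hmem v
    dsimp only at huv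
    omega
  · have := hmem v
    dsimp only
    omega
  · have := hmem x
    have := hord x hx y hy
    dsimp only
    omega

end

theorem sixC_to_setOrderedGraceful_general {V : Type*}
    (G : SimpleGraph V)
    (p : ℕ)
    (X Y : Finset V)
    (gv : V → ℕ) (ge : Sym2 V → ℕ)
    (hgvinj : Function.Injective gv) (hgvmem : ∀ v : V, 1 ≤ gv v ∧ gv v ≤ p)
    (hgeinj : ∀ e ∈ G.edgeSet, ∀ e' ∈ G.edgeSet, ge e = ge e' → e = e')
    (hgemem : ∀ e ∈ G.edgeSet, p + 1 ≤ ge e ∧ ge e ≤ p + (p - 1))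
    (hgesurj : ∀ m : ℕ, p + 1 ≤ m → m ≤ p + (p - 1) → ∃ e ∈ G.edgeSet, ge e = m)
    (hord : ∀ x ∈ X, ∀ y ∈ Y, gv x < gv y)
    (hmagic : ∀ u v : V, G.Adj u v → ge s(u, v) + elabel gv u v = p + (p - 1) + 1) :
    ∃ f : V → ℕ, IsSetOrderedGraceful G X Y (p - 1) f := by
  have hedge : HasGracefulEdgeLabels G (p - 1) gv :=
    .of_magic ge hgeinj hgemem hgesurj hmagic
  have hmem : ∀ v, 1 ≤ gv v ∧ gv v ≤ 1 + (p - 1) := fun v => by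
    have := hgvmem v
    omega
  exact ⟨_, isSetOrderedGraceful_sub_const hgvinj hmem hedge hord⟩

/-- If a finite tree with `p ≥ 2` vertices and `q = p - 1` edges and bipartition
`(X, Y)` has a total labelling `g`, a bijection from `V(T) ∪ E(T)` onto `{1,…,p+q}`
with `g(V(T)) = {1,…,p}`, set-ordered on vertices and satisfying
`g(uv) + |g(u) - g(v)| = p + q + 1` for every edge `uv`, then the tree admits a
set-ordered graceful labelling with respect to `(X, Y)`. -/
theorem sixC_to_setOrderedGraceful {V : Type*} [Fintype V] [DecidableEq V]
    (G : SimpleGraph V) (hT : G.IsTree)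
    (p : ℕ) (hp : Fintype.card V = p) (hp2 : 2 ≤ p)
    (X Y : Finset V) (hbip : IsBipartitionOf G X Y)
    (gv : V → ℕ) (ge : Sym2 V → ℕ)
    (hgvinj : Function.Injective gv) (hgvmem : ∀ v : V, 1 ≤ gv v ∧ gv v ≤ p)
    (hgvsurj : ∀ m : ℕ, 1 ≤ m → m ≤ p → ∃ v : V, gv v = m)
    (hgeinj : ∀ e ∈ G.edgeSet, ∀ e' ∈ G.edgeSet, ge e = ge e' → e = e')
    (hgemem : ∀ e ∈ G.edgeSet, p + 1 ≤ ge e ∧ ge e ≤ p + (p - 1))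
    (hgesurj : ∀ m : ℕ, p + 1 ≤ m → m ≤ p + (p - 1) → ∃ e ∈ G.edgeSet, ge e = m)
    (hord : ∀ x ∈ X, ∀ y ∈ Y, gv x < gv y)
    (hmagic : ∀ u v : V, G.Adj u v → ge s(u, v) + elabel gv u v = p + (p - 1) + 1) :
    ∃ f : V → ℕ, IsSetOrderedGraceful G X Y (p - 1) f :=
  sixC_to_setOrderedGraceful_general G p X Y gv ge hgvinj hgvmem hgeinj hgemem hgesurj hord hmagic
end

section
/- For every finite tree T with n ≥ 2 vertices, there exists a function g : V(T) → ℤ/nℤ such that the edge sums g(u) + g(v) (computed in ℤ/nℤ), over all n − 1 edges uv of T, are pairwise distinct. -/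
open SimpleGraph Walk

namespace TreeAux

variable {V : Type*} {G : SimpleGraph V} (hT : G.IsTree) (r : V)

/-- the unique path from `v` to the root `r`. -/
noncomputable def thePath (v : V) : G.Walk v r := (hT.existsUnique_path v r).choose

lemma thePath_isPath (v : V) : (thePath hT r v).IsPath :=
  (hT.existsUnique_path v r).choose_spec.1

lemma thePath_unique {v : V} (q : G.Walk v r) (hq : q.IsPath) : q = thePath hT r v :=
  (hT.existsUnique_path v r).choose_spec.2 q hq

/-- the parent of a vertex. -/
noncomputable def parent (v : V) : V := (thePath hT r v).getVert 1

noncomputable def len (v : V) : ℕ := (thePath hT r v).length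

lemma not_nil {v : V} (hv : v ≠ r) : ¬ (thePath hT r v).Nil :=
  Walk.not_nil_of_ne hv

lemma adj_parent {v : V} (hv : v ≠ r) : G.Adj v (parent hT r v) :=
  (thePath hT r v).adj_snd (not_nil hT r hv)

lemma thePath_parent {v : V} (hv : v ≠ r) :
    (thePath hT r v).tail = thePath hT r (parent hT r v) :=
  thePath_unique hT r _ ((thePath_isPath hT r v).tail)

lemma len_parent_lt {v : V} (hv : v ≠ r) : len hT r (parent hT r v) < len hT r v := by
  have h := length_tail_add_one (not_nil hT r hv)
  rw [thePath_parent hT r hv] at h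
  unfold len
  rw [← h]
  exact Nat.lt_succ_self _

/-- the labelling, defined by recursion towards the root. -/
noncomputable def gfun [DecidableEq V] {M : Type*} [AddCommGroup M] (h0 : V → M) (v : V) : M :=
  if hv : v = r then 0 else h0 v - gfun h0 (parent hT r v)
termination_by len hT r v
decreasing_by exact len_parent_lt hT r hv

lemma gfun_add [DecidableEq V] {M : Type*} [AddCommGroup M] (h0 : V → M) {v : V} (hv : v ≠ r) :
    gfun hT r h0 (parent hT r v) + gfun hT r h0 v = h0 v := by
  nth_rewrite 2 [gfun]
  rw [dif_neg hv]
  exact add_sub_cancel _ _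

/-- for any edge, one endpoint is the parent of the other. -/
lemma dichotomy {u v : V} (h : G.Adj u v) :
    (v ≠ r ∧ parent hT r v = u) ∨ (u ≠ r ∧ parent hT r u = v) := by
  classical
  by_cases hv : v ∈ (thePath hT r u).support
  · -- the path from u passes through v; show parent u = v
    right
    have hu : u ≠ r := by
      intro hur
      rw [hur] at hv
      have hnil : thePath hT r r = Walk.nil := (thePath_unique hT r Walk.nil IsPath.nil).symm
      rw [hnil] at hv
      simp at hv
      rw [hur] at h
      exact h.ne hv.symm
    refine ⟨hu, ?_⟩
    -- takeUntil is the unique path u → v, which is the single edge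
    have htake : (Walk.cons h Walk.nil : G.Walk u v) = (thePath hT r u).takeUntil v hv := by
      have h1 : ((thePath hT r u).takeUntil v hv).IsPath :=
        (thePath_isPath hT r u).takeUntil hv
      have h2 : (Walk.cons h Walk.nil : G.Walk u v).IsPath := by
        simp [Walk.cons_isPath_iff, h.ne]
      -- both are paths u → v in a tree
      have := hT.existsUnique_path u v
      obtain ⟨p, _, hp⟩ := this
      rw [hp _ h2, hp _ h1]
    have hspec := Walk.take_spec (thePath hT r u) hv
    rw [← htake] at hspec
    unfold parent
    rw [← hspec]
    simp [Walk.cons_append, Walk.nil_append, Walk.getVert_cons_succ]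
  · left
    have hvr : v ≠ r := by
      intro hvr
      rw [hvr] at hv
      exact hv (thePath hT r u).end_mem_support
    refine ⟨hvr, ?_⟩
    have h2 : (Walk.cons h.symm (thePath hT r u) : G.Walk v r).IsPath :=
      (thePath_isPath hT r u).cons hv
    have := thePath_unique hT r _ h2
    unfold parent
    rw [← this]
    simp [Walk.getVert_cons_succ]

end TreeAux

/-- For every finite tree `T` on `n ≥ 2` vertices there is a labelling of the vertices
by `ℤ/nℤ` such that the edge sums `g u + g v` over the edges are pairwise distinct. -/
theorem tree_distinct_edge_sums_zmod {V : Type*} [Fintype V]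
    (G : SimpleGraph V) (hT : G.IsTree) (h2 : 2 ≤ Fintype.card V) :
    ∃ g : V → ZMod (Fintype.card V),
      ∀ u v u' v' : V, G.Adj u v → G.Adj u' v' →
        g u + g v = g u' + g v' → s(u, v) = s(u', v') := by
  classical
  have hpos : 0 < Fintype.card V := by omega
  have : Nonempty V := Fintype.card_pos_iff.mp hpos
  obtain ⟨r⟩ := this
  have : NeZero (Fintype.card V) := ⟨by omega⟩
  have hcard : Fintype.card V = Fintype.card (ZMod (Fintype.card V)) := by
    simp [ZMod.card]
  let h0 : V → ZMod (Fintype.card V) := Fintype.equivOfCardEq hcard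
  have h0inj : Function.Injective h0 := (Fintype.equivOfCardEq hcard).injective
  refine ⟨TreeAux.gfun hT r h0, ?_⟩
  intro u v u' v' huv huv' hsum
  -- reduce each edge to its child vertex
  have key : ∀ u v : V, G.Adj u v →
      ∃ c : V, c ≠ r ∧ s(u, v) = s(TreeAux.parent hT r c, c) ∧
        TreeAux.gfun hT r h0 u + TreeAux.gfun hT r h0 v = h0 c := by
    intro a b hab
    rcases TreeAux.dichotomy hT r hab with ⟨hbr, hpb⟩ | ⟨har, hpa⟩
    · exact ⟨b, hbr, by rw [hpb], by rw [← hpb]; exact TreeAux.gfun_add hT r h0 hbr⟩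
    · refine ⟨a, har, by rw [hpa, Sym2.eq_swap], ?_⟩
      rw [add_comm, ← hpa]
      exact TreeAux.gfun_add hT r h0 har
  obtain ⟨c, hcr, hce, hcs⟩ := key u v huv
  obtain ⟨c', hcr', hce', hcs'⟩ := key u' v' huv'
  rw [hcs, hcs'] at hsum
  have : c = c' := h0inj hsum
  rw [hce, hce', this]
end

section
/- For every finite tree T with n ≥ 2 vertices, there exists a function g : V(T) → {1, 2, …, 2n} such that the residues (g(u) + g(v)) mod 2n, over all n − 1 edges uv of T, are pairwise distinct and each of these residues is an odd number. -/
/-!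
Root the tree at `r`. Every edge has exactly one endpoint farther from `r`, and in a tree each
vertex other than `r` has a unique neighbour closer to `r`, so edges correspond injectively to
their far endpoints. Give each vertex `c` the odd target `2 ι(c) + 1` in `ZMod (2n)`, with `ι`
an enumeration of the vertices, and solve `h c + h (closer neighbour of c) = 2 ι(c) + 1`
outwards from `h r = 0`. The edge sums of `h` are then the targets of their far endpoints,
hence pairwise distinct and odd.
-/

namespace SimpleGraph

variable {V : Type*} {G : SimpleGraph V}

lemma IsTree.eq_penultimate_of_dist_eq_add_one (hG : G.IsTree) {r u v : V} {p : G.Walk r v}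
    (hp : p.IsPath) (hadj : G.Adj u v) (hdist : G.dist r v = G.dist r u + 1) :
    u = p.penultimate := by
  classical
  obtain ⟨q, hq, hq_len⟩ := (hG.connected r u).exists_path_of_dist
  have hv : v ∉ q.support := fun hv => by
    have := (dist_le (q.takeUntil v hv)).trans (q.length_takeUntil_le_length hv)
    omega
  exact hG.isAcyclic.eq_penultimate_of_adj_end hp hadj.symm
    (hG.isAcyclic.mem_support_of_ne_mem_support_of_adj_of_isPath hp hq hadj.symm hv)

lemma IsTree.eq_of_adj_of_dist_eq_add_one (hG : G.IsTree) (r : V) {u u' v : V}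
    (hu : G.Adj u v) (hu' : G.Adj u' v) (hdist : G.dist r v = G.dist r u + 1)
    (hdist' : G.dist r v = G.dist r u' + 1) : u = u' := by
  obtain ⟨p, hp, -⟩ := (hG.connected r v).exists_path_of_dist
  rw [hG.eq_penultimate_of_dist_eq_add_one hp hu hdist,
    hG.eq_penultimate_of_dist_eq_add_one hp hu' hdist']

lemma IsTree.exists_edge_eq_and_dist_eq_add_one (hG : G.IsTree) (r : V) {u v : V}
    (hadj : G.Adj u v) :
    ∃ a c, s(u, v) = s(a, c) ∧ G.Adj a c ∧ G.dist r c = G.dist r a + 1 := by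
  rcases hG.dist_eq_dist_add_one_of_adj r hadj with h | h
  · exact ⟨v, u, Sym2.eq_swap, hadj.symm, h⟩
  · exact ⟨u, v, rfl, hadj, h⟩

variable {A : Type*} [AddCommGroup A]

open Classical in
noncomputable def rootedPotential (G : SimpleGraph V) (r : V) (t : V → A) (v : V) : A :=
  if h : ∃ w, G.Adj v w ∧ G.dist r v = G.dist r w + 1 then
    t v - rootedPotential G r t h.choose
  else 0
termination_by G.dist r v
decreasing_by have := h.choose_spec.2; omega

lemma IsTree.rootedPotential_add_rootedPotential (hG : G.IsTree) (r : V) (t : V → A)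
    {u v : V} (hadj : G.Adj u v) (hdist : G.dist r v = G.dist r u + 1) :
    G.rootedPotential r t u + G.rootedPotential r t v = t v := by
  have hex : ∃ w, G.Adj v w ∧ G.dist r v = G.dist r w + 1 := ⟨u, hadj.symm, hdist⟩
  have hchoose : hex.choose = u :=
    hG.eq_of_adj_of_dist_eq_add_one r hex.choose_spec.1.symm hadj hex.choose_spec.2 hdist
  rw [rootedPotential.eq_def G r t v, dif_pos hex, hchoose]
  abel

theorem IsTree.exists_edge_sums_injective_mem_range [Nonempty V] (hG : G.IsTree) {t : V → A}
    (ht : Function.Injective t) :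
    ∃ h : V → A, (∀ u v, G.Adj u v → h u + h v ∈ Set.range t) ∧
      ∀ u v u' v', G.Adj u v → G.Adj u' v' → h u + h v = h u' + h v' →
        s(u, v) = s(u', v') := by
  obtain ⟨r⟩ := ‹Nonempty V›
  have hsum : ∀ u v, G.Adj u v → ∃ a c, s(u, v) = s(a, c) ∧ G.Adj a c ∧
      G.dist r c = G.dist r a + 1 ∧ G.rootedPotential r t u + G.rootedPotential r t v = t c := by
    intro u v huv
    obtain ⟨a, c, he, hac, hdist⟩ := hG.exists_edge_eq_and_dist_eq_add_one r huv
    refine ⟨a, c, he, hac, hdist, ?_⟩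
    rw [← hG.rootedPotential_add_rootedPotential r t hac hdist]
    rcases Sym2.eq_iff.mp he with ⟨rfl, rfl⟩ | ⟨rfl, rfl⟩
    · rfl
    · exact add_comm _ _
  refine ⟨G.rootedPotential r t, fun u v huv => ?_, fun u v u' v' huv hu'v' heq => ?_⟩
  · obtain ⟨_, c, -, -, -, hc⟩ := hsum u v huv
    exact ⟨c, hc.symm⟩
  · obtain ⟨a, c, he, hac, hdist, hc⟩ := hsum u v huv
    obtain ⟨a', c', he', hac', hdist', hc'⟩ := hsum u' v' hu'v'
    obtain rfl : c = c' := ht (hc.symm.trans (heq.trans hc'))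
    rw [he, he', hG.eq_of_adj_of_dist_eq_add_one r hac hac' hdist hdist']

end SimpleGraph

/-- The representative of `x : ZMod N` in `{1, …, N}` is `(x - 1).val + 1`. -/
lemma ZMod.val_sub_one_add_one_add_mod {N : ℕ} [NeZero N] (x y : ZMod N) :
    ((x - 1).val + 1 + ((y - 1).val + 1)) % N = (x + y).val := by
  rw [← ZMod.val_natCast]
  push_cast
  simp only [ZMod.natCast_zmod_val, sub_add_cancel]

theorem tree_odd_distinct_edge_residues_general {V : Type*} [Fintype V]
    (G : SimpleGraph V) (hT : G.IsTree) :
    ∃ g : V → ℕ,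
      (∀ v : V, 1 ≤ g v ∧ g v ≤ 2 * Fintype.card V) ∧
      (∀ u v u' v' : V, G.Adj u v → G.Adj u' v' →
        (g u + g v) % (2 * Fintype.card V) = (g u' + g v') % (2 * Fintype.card V) →
          s(u, v) = s(u', v')) ∧
      (∀ u v : V, G.Adj u v → Odd ((g u + g v) % (2 * Fintype.card V))) := by
  have := hT.connected.nonempty
  set n := Fintype.card V
  have : NeZero (2 * n) := ⟨by have := Fintype.card_pos (α := V); omega⟩
  let e := Fintype.equivFin V
  let t : V → ZMod (2 * n) := fun v => ((2 * e v + 1 : ℕ) : ZMod (2 * n))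
  have ht_val : ∀ v, (t v).val = 2 * e v + 1 := fun v => by
    rw [ZMod.val_natCast, Nat.mod_eq_of_lt (by omega)]
  have ht : Function.Injective t := fun v w hvw => e.injective <| Fin.ext <| by
    have := congrArg ZMod.val hvw
    rw [ht_val, ht_val] at this
    omega
  obtain ⟨h, hrange, hinj⟩ := hT.exists_edge_sums_injective_mem_range ht
  refine ⟨fun v => (h v - 1).val + 1, fun v => ⟨Nat.le_add_left 1 _, (h v - 1).val_lt⟩,
    ?_, ?_⟩
  · intro u v u' v' huv hu'v' hmod
    simp only [ZMod.val_sub_one_add_one_add_mod] at hmod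
    exact hinj u v u' v' huv hu'v' (ZMod.val_injective _ hmod)
  · intro u v huv
    obtain ⟨c, hc⟩ := hrange u v huv
    rw [ZMod.val_sub_one_add_one_add_mod, ← hc, ht_val]
    exact odd_two_mul_add_one _

/-- For every finite tree `T` on `n ≥ 2` vertices there is a function
`g : V(T) → {1,…,2n}` such that the residues `(g u + g v) mod 2n`, over the edges,
are pairwise distinct and each residue is odd. -/
theorem tree_odd_distinct_edge_residues {V : Type*} [Fintype V]
    (G : SimpleGraph V) (hT : G.IsTree) (h2 : 2 ≤ Fintype.card V) :
    ∃ g : V → ℕ,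
      (∀ v : V, 1 ≤ g v ∧ g v ≤ 2 * Fintype.card V) ∧
      (∀ u v u' v' : V, G.Adj u v → G.Adj u' v' →
        (g u + g v) % (2 * Fintype.card V) = (g u' + g v') % (2 * Fintype.card V) →
          s(u, v) = s(u', v')) ∧
      (∀ u v : V, G.Adj u v → Odd ((g u + g v) % (2 * Fintype.card V))) :=
  tree_odd_distinct_edge_residues_general G hT
end
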